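/- arXiv:2404.05678 — 8 statements merged into one kernel-verified Lean document; each statement's English description precedes it below -/
import Mathlib

section
/- Let 𝒜 and 𝒴 be finite sets and r a strictly positive joint probability mass function on 𝒜 × 𝒴, with marginals r_A(a) = Σ_y r(a,y) and r_Y(y) = Σ_a r(a,y), and conditionals q_{Y|A}(y|a) = r(a,y)/r_A(a) and q_{A|Y}(a|y) = r(a,y)/r_Y(y). Then for every n ≥ 1, every a ∈ 𝒜ⁿ, y ∈ 𝒴ⁿ, and every permutation π of {1,…,n}: ∏_{i=1}^n q_{Y|A}(y_{π⁻¹(i)}|a_i) / Σ_{π'} ∏_{i=1}^n q_{Y|A}(y_{π'⁻¹(i)}|a_i) = ∏_{i=1}^n q_{A|Y}(a_{π(i)}|y_i) / Σ_{π'} ∏_{i=1}^n q_{A|Y}(a_{π'(i)}|y_i), where the sums run over all permutations π' of {1,…,n}. -/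
/-!
Dividing out the conditionals, both the ICP and the CP weight of `π` equal the joint weight
`∏ i, r (a i) (y (π⁻¹ i))` divided by a constant independent of `π` (the product of the
`A`-marginals of the `a i`, resp. of the `Y`-marginals of the `y i`), and such a constant
cancels when the weights are normalized.
-/

open Finset

theorem div_const_div_sum_div_const {K ι : Type*} [Field K] [Fintype ι] (w : ι → K) {c : K}
    (hc : c ≠ 0) (i : ι) : w i / c / ∑ j, w j / c = w i / ∑ j, w j := by
  rw [← sum_div, div_div_div_cancel_right₀ hc]

theorem stmt_2_general {𝒜 𝒴 : Type*} [Fintype 𝒜] [Fintype 𝒴]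
    (r : 𝒜 → 𝒴 → ℝ) (hr : ∀ a y, 0 < r a y)
    {n : ℕ} (a : Fin n → 𝒜) (y : Fin n → 𝒴) (π : Equiv.Perm (Fin n)) :
    (∏ i, (r (a i) (y (π⁻¹ i)) / ∑ y', r (a i) y')) /
        (∑ π' : Equiv.Perm (Fin n), ∏ i, (r (a i) (y (π'⁻¹ i)) / ∑ y', r (a i) y'))
      = (∏ i, (r (a (π i)) (y i) / ∑ a', r a' (y i))) /
        (∑ π' : Equiv.Perm (Fin n), ∏ i, (r (a (π' i)) (y i) / ∑ a', r a' (y i))) := by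
  have hA : ∏ i, ∑ y', r (a i) y' ≠ 0 :=
    prod_ne_zero_iff.2 fun i _ => (sum_pos (fun _ _ => hr _ _) ⟨y i, mem_univ _⟩).ne'
  have hY : ∏ i, ∑ a', r a' (y i) ≠ 0 :=
    prod_ne_zero_iff.2 fun i _ => (sum_pos (fun _ _ => hr _ _) ⟨a i, mem_univ _⟩).ne'
  have reindex (σ : Equiv.Perm (Fin n)) : ∏ i, r (a (σ i)) (y i) = ∏ i, r (a i) (y (σ⁻¹ i)) :=
    σ.prod_comp' univ (fun i j => r (a i) (y j)) fun _ _ => mem_univ _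
  simp only [prod_div_distrib, reindex]
  set w : Equiv.Perm (Fin n) → ℝ := fun σ => ∏ i, r (a i) (y (σ⁻¹ i))
  exact (div_const_div_sum_div_const w hA π).trans (div_const_div_sum_div_const w hY π).symm

/-- with a strictly positive joint pmf `r` on `𝒜 × 𝒴`, the ICP distribution on
permutations (weights `∏ i, q_{Y|A}(y_{π⁻¹(i)} | a_i)`, normalized) coincides with the CP
distribution (weights `∏ i, q_{A|Y}(a_{π(i)} | y_i)`, normalized). -/
theorem stmt_2 {𝒜 𝒴 : Type*} [Fintype 𝒜] [Fintype 𝒴]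
    (r : 𝒜 → 𝒴 → ℝ) (hr : ∀ a y, 0 < r a y) (hr1 : ∑ a, ∑ y, r a y = 1)
    {n : ℕ} (hn : 1 ≤ n) (a : Fin n → 𝒜) (y : Fin n → 𝒴) (π : Equiv.Perm (Fin n)) :
    (∏ i, (r (a i) (y (π⁻¹ i)) / ∑ y', r (a i) y')) /
        (∑ π' : Equiv.Perm (Fin n), ∏ i, (r (a i) (y (π'⁻¹ i)) / ∑ y', r (a i) y'))
      = (∏ i, (r (a (π i)) (y i) / ∑ a', r a' (y i))) /
        (∑ π' : Equiv.Perm (Fin n), ∏ i, (r (a (π' i)) (y i) / ∑ a', r a' (y i))) :=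
  stmt_2_general r hr a y π
end

section
/- Let 𝒜 and 𝒴 be finite sets and let (A_1,Y_1),…,(A_n,Y_n) be i.i.d. with a strictly positive joint probability mass function r on 𝒜 × 𝒴, with conditional q(y|a) = r(a,y)/Σ_{y'} r(a,y'). Let Π be a random permutation whose conditional distribution given (A,Y) is the ICP distribution with density q, and set Ã = A_Π. Then for every vector a ∈ 𝒜ⁿ, every y ∈ 𝒴ⁿ with positive probability for the conditioning event, and every permutation π: P(A = a_π | S(A) = S(a), Y = y) = P(Ã = a_π | S(Ã) = S(a), Y = y). -/
/-- Probability of an event under a probability mass function `p` on a finite sample space. -/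
noncomputable def Pr {Ω : Type*} [Fintype Ω] (p : Ω → ℝ) (E : Set Ω) : ℝ :=
  ∑ ω, E.indicator p ω

/-- The unordered multiset of values of a vector. -/
def multisetOf {α : Type*} {n : ℕ} (v : Fin n → α) : Multiset α :=
  Multiset.map v Finset.univ.val

/-- The ICP (inverse conditional permutation) probability of a permutation `π`, for the
conditional density `q` of `Y` given `A`:
`∏ i, q (y (π⁻¹ i)) (a i) / ∑ π', ∏ i, q (y (π'⁻¹ i)) (a i)`. -/
noncomputable def ICPweight {𝒜 𝒴 : Type*} {n : ℕ} (q : 𝒴 → 𝒜 → ℝ)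
    (a : Fin n → 𝒜) (y : Fin n → 𝒴) (π : Equiv.Perm (Fin n)) : ℝ :=
  (∏ i, q (y (π⁻¹ i)) (a i)) / ∑ π' : Equiv.Perm (Fin n), ∏ i, q (y (π'⁻¹ i)) (a i)

lemma multisetOf_comp_perm {α : Type*} {n : ℕ} (v : Fin n → α) (σ : Equiv.Perm (Fin n)) :
    multisetOf (fun i => v (σ i)) = multisetOf v := by
  unfold multisetOf
  have h1 : (Finset.univ.val : Multiset (Fin n)).map (fun i => v (σ i))
      = ((Finset.univ.val : Multiset (Fin n)).map σ).map v := by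
    rw [Multiset.map_map]; rfl
  have h2 : (Finset.univ.val : Multiset (Fin n)).map σ = Finset.univ.val := by
    have := Finset.map_univ_equiv σ
    calc (Finset.univ.val : Multiset (Fin n)).map σ
        = (Finset.map σ.toEmbedding Finset.univ).val := rfl
      _ = (Finset.univ : Finset (Fin n)).val := by rw [this]
  rw [h1, h2]

/-- if `(A_i, Y_i)` are i.i.d. with strictly positive joint pmf `r`,
`q(y|a)` is the conditional pmf of `Y` given `A`, and `Ã = A_Π` where `Π` has the ICP
conditional distribution given `(A, Y)`, then for every `a`, `y`, `π`:
`P(A = a_π | S(A) = S(a), Y = y) = P(Ã = a_π | S(Ã) = S(a), Y = y)`. -/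
theorem stmt_3 {Ω 𝒜 𝒴 : Type*} [Fintype Ω] [Fintype 𝒜] [Fintype 𝒴]
    (p : Ω → ℝ) (hp0 : ∀ ω, 0 ≤ p ω) (hp1 : ∑ ω, p ω = 1)
    (r : 𝒜 → 𝒴 → ℝ) (hr : ∀ b y0, 0 < r b y0) (hr1 : ∑ b, ∑ y0, r b y0 = 1)
    {n : ℕ} (hn : 1 ≤ n)
    (A : Ω → Fin n → 𝒜) (Y : Ω → Fin n → 𝒴) (Prm : Ω → Equiv.Perm (Fin n))
    (q : 𝒴 → 𝒜 → ℝ) (hq : ∀ y0 b, q y0 b = r b y0 / ∑ y', r b y')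
    (hiid : ∀ (a : Fin n → 𝒜) (y : Fin n → 𝒴),
      Pr p {ω | A ω = a ∧ Y ω = y} = ∏ i, r (a i) (y i))
    (hPrm : ∀ (a : Fin n → 𝒜) (y : Fin n → 𝒴) (π : Equiv.Perm (Fin n)),
      Pr p {ω | Prm ω = π ∧ A ω = a ∧ Y ω = y}
        = ICPweight q a y π * Pr p {ω | A ω = a ∧ Y ω = y})
    (a : Fin n → 𝒜) (y : Fin n → 𝒴)
    (hpos : 0 < Pr p {ω | multisetOf (A ω) = multisetOf a ∧ Y ω = y})
    (π : Equiv.Perm (Fin n)) :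
    Pr p {ω | A ω = (fun i => a (π i)) ∧ multisetOf (A ω) = multisetOf a ∧ Y ω = y} /
        Pr p {ω | multisetOf (A ω) = multisetOf a ∧ Y ω = y}
      = Pr p {ω | (fun i => A ω (Prm ω i)) = (fun i => a (π i)) ∧
            multisetOf (fun i => A ω (Prm ω i)) = multisetOf a ∧ Y ω = y} /
        Pr p {ω | multisetOf (fun i => A ω (Prm ω i)) = multisetOf a ∧ Y ω = y} := by
  classical
  set aπ : Fin n → 𝒜 := fun i => a (π i) with haπ
  -- positivity of marginals and q
  have h𝒴 : Nonempty 𝒴 := by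
    by_contra h
    rw [not_nonempty_iff] at h
    simp at hr1
  have hm : ∀ b, 0 < ∑ y', r b y' :=
    fun b => Finset.sum_pos (fun y' _ => hr b y') Finset.univ_nonempty
  have hqpos : ∀ y0 b, 0 < q y0 b := by
    intro y0 b; rw [hq]; exact div_pos (hr b y0) (hm b)
  have hrq : ∀ b y0, r b y0 = q y0 b * ∑ y', r b y' := by
    intro b y0; rw [hq, div_mul_cancel₀ _ (hm b).ne']
  -- multiset of aπ
  have hmaπ : multisetOf aπ = multisetOf a := multisetOf_comp_perm a π
  -- set rewrites
  have hS1 : {ω | A ω = aπ ∧ multisetOf (A ω) = multisetOf a ∧ Y ω = y}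
      = {ω | A ω = aπ ∧ Y ω = y} := by
    ext ω
    simp only [Set.mem_setOf_eq]
    constructor
    · rintro ⟨h1, _, h3⟩; exact ⟨h1, h3⟩
    · rintro ⟨h1, h3⟩; exact ⟨h1, by rw [h1, hmaπ], h3⟩
  have hS2 : {ω | multisetOf (fun i => A ω (Prm ω i)) = multisetOf a ∧ Y ω = y}
      = {ω | multisetOf (A ω) = multisetOf a ∧ Y ω = y} := by
    ext ω
    simp only [Set.mem_setOf_eq, multisetOf_comp_perm (A ω) (Prm ω)]
  have hS3 : {ω | (fun i => A ω (Prm ω i)) = aπ ∧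
        multisetOf (fun i => A ω (Prm ω i)) = multisetOf a ∧ Y ω = y}
      = {ω | (fun i => A ω (Prm ω i)) = aπ ∧ Y ω = y} := by
    ext ω
    simp only [Set.mem_setOf_eq]
    constructor
    · rintro ⟨h1, _, h3⟩; exact ⟨h1, h3⟩
    · rintro ⟨h1, h3⟩; exact ⟨h1, by rw [h1, hmaπ], h3⟩
  rw [hS1, hS2, hS3]
  congr 1
  -- main numerator identity
  -- notation
  set m : 𝒜 → ℝ := fun b => ∑ y', r b y' with hmdef
  set N : ℝ := ∏ j, q (y j) (a (π j)) with hN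
  set D : ℝ := ∑ τ : Equiv.Perm (Fin n), ∏ k, q (y (τ k)) (a k) with hD
  set M : ℝ := ∏ i, m (a i) with hM
  have hDpos : 0 < D := by
    rw [hD]
    exact Finset.sum_pos (fun τ _ => Finset.prod_pos fun k _ => hqpos _ _)
      Finset.univ_nonempty
  -- LHS
  have hLHS : Pr p {ω | A ω = aπ ∧ Y ω = y} = N * M := by
    rw [hiid]
    have : ∀ i, r (aπ i) (y i) = q (y i) (a (π i)) * m (a (π i)) := by
      intro i; rw [haπ]; exact hrq _ _
    rw [Finset.prod_congr rfl (fun i _ => this i), Finset.prod_mul_distrib]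
    congr 1
    rw [hM]
    exact Equiv.prod_comp π (fun j => m (a j))
  -- partition RHS over the value of Prm
  have hpart : Pr p {ω | (fun i => A ω (Prm ω i)) = aπ ∧ Y ω = y}
      = ∑ σ : Equiv.Perm (Fin n),
          Pr p {ω | Prm ω = σ ∧ A ω = (fun i => aπ (σ⁻¹ i)) ∧ Y ω = y} := by
    unfold Pr
    rw [Finset.sum_comm]
    apply Finset.sum_congr rfl
    intro ω _
    rw [Finset.sum_eq_single (Prm ω)]
    · -- indicator equality at σ = Prm ω
      have hiff : (A ω = (fun i => aπ ((Prm ω)⁻¹ i)) ∧ Y ω = y)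
          ↔ ((fun i => A ω (Prm ω i)) = aπ ∧ Y ω = y) := by
        constructor
        · rintro ⟨h2, h3⟩
          refine ⟨funext fun i => ?_, h3⟩
          rw [congrFun h2 (Prm ω i)]
          simp
        · rintro ⟨h2, h3⟩
          refine ⟨funext fun i => ?_, h3⟩
          have := congrFun h2 ((Prm ω)⁻¹ i)
          simpa using this
      simp only [Set.indicator_apply, Set.mem_setOf_eq, hiff, true_and]
    · intro σ _ hσ
      apply Set.indicator_of_notMem
      rintro ⟨h1, -⟩
      exact hσ h1.symm
    · intro h; exact absurd (Finset.mem_univ _) h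
  rw [hLHS, hpart]
  -- compute each summand
  have hterm : ∀ σ : Equiv.Perm (Fin n),
      Pr p {ω | Prm ω = σ ∧ A ω = (fun i => aπ (σ⁻¹ i)) ∧ Y ω = y}
        = (N / D) * (M * ∏ i, q (y i) (a (π (σ⁻¹ i)))) := by
    intro σ
    rw [hPrm, hiid]
    have haπ' : (fun i => aπ (σ⁻¹ i)) = fun i => a (π (σ⁻¹ i)) := rfl
    -- ICP weight = N / D
    have hICP : ICPweight q (fun i => aπ (σ⁻¹ i)) y σ = N / D := by
      unfold ICPweight
      rw [haπ']
      congr 1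
      · -- numerator equals N
        rw [hN]
        exact Equiv.prod_comp σ⁻¹ (fun j => q (y j) (a (π j)))
      · -- denominator equals D
        have step1 : ∀ σ' : Equiv.Perm (Fin n),
            ∏ i, q (y (σ'⁻¹ i)) (a (π (σ⁻¹ i)))
              = ∏ j, q (y ((σ'⁻¹ * σ) j)) (a (π j)) := by
          intro σ'
          rw [← Equiv.prod_comp σ (fun i => q (y (σ'⁻¹ i)) (a (π (σ⁻¹ i))))]
          apply Finset.prod_congr rfl
          intro j _
          simp [Equiv.Perm.mul_apply]
        rw [Finset.sum_congr rfl (fun σ' _ => step1 σ')]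
        have e1 : ∑ σ' : Equiv.Perm (Fin n), ∏ j, q (y ((σ'⁻¹ * σ) j)) (a (π j))
            = ∑ ρ : Equiv.Perm (Fin n), ∏ j, q (y (ρ j)) (a (π j)) := by
          exact Equiv.sum_comp ((Equiv.inv (Equiv.Perm (Fin n))).trans (Equiv.mulRight σ))
            (fun ρ => ∏ j, q (y (ρ j)) (a (π j)))
        rw [e1, hD]
        have e2 : ∀ ρ : Equiv.Perm (Fin n),
            ∏ j, q (y (ρ j)) (a (π j)) = ∏ k, q (y ((ρ * π⁻¹) k)) (a k) := by
          intro ρ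
          rw [← Equiv.prod_comp π⁻¹ (fun j => q (y (ρ j)) (a (π j)))]
          apply Finset.prod_congr rfl
          intro k _
          simp [Equiv.Perm.mul_apply]
        rw [Finset.sum_congr rfl (fun ρ _ => e2 ρ)]
        exact Equiv.sum_comp (Equiv.mulRight π⁻¹) (fun τ => ∏ k, q (y (τ k)) (a k))
    rw [hICP]
    congr 1
    -- product of r factorizes
    have : ∀ i, r (aπ (σ⁻¹ i)) (y i) = q (y i) (a (π (σ⁻¹ i))) * m (a (π (σ⁻¹ i))) :=
      fun i => hrq _ _
    rw [Finset.prod_congr rfl (fun i _ => this i), Finset.prod_mul_distrib, mul_comm]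
    congr 1
    rw [hM]
    exact Equiv.prod_comp (π * σ⁻¹) (fun j => m (a j))
  rw [Finset.sum_congr rfl (fun σ _ => hterm σ)]
  -- sum the q-products to D
  have hC : ∑ σ : Equiv.Perm (Fin n), ∏ i, q (y i) (a (π (σ⁻¹ i))) = D := by
    have e3 : ∀ σ : Equiv.Perm (Fin n),
        ∏ i, q (y i) (a (π (σ⁻¹ i))) = ∏ k, q (y ((σ * π⁻¹) k)) (a k) := by
      intro σ
      rw [← Equiv.prod_comp (π * σ⁻¹)⁻¹ (fun i => q (y i) (a (π (σ⁻¹ i))))]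
      apply Finset.prod_congr rfl
      intro k _
      simp [Equiv.Perm.mul_apply, mul_inv_rev]
    rw [Finset.sum_congr rfl (fun σ _ => e3 σ), hD]
    exact Equiv.sum_comp (Equiv.mulRight π⁻¹) (fun τ => ∏ k, q (y (τ k)) (a k))
  rw [← Finset.mul_sum, ← Finset.mul_sum, hC]
  field_simp
end

section
/- Let 𝒳, 𝒜, 𝒴, 𝒴' be finite sets, and let (X_1,A_1,Y_1),…,(X_n,A_n,Y_n) be i.i.d. from a joint probability mass function on 𝒳 × 𝒜 × 𝒴 whose (A,Y)-marginal is strictly positive; let q(y|a) = P(Y_1 = y | A_1 = a). Let f : 𝒳 → 𝒴' and Ŷ_i = f(X_i). Let Π be a random permutation whose conditional distribution given (A,Y) (and independent of X given (A,Y)) is the ICP distribution with density q, and set Ã = A_Π. If f(X_1) is conditionally independent of A_1 given Y_1, then the joint distribution of the n-tuples (Ŷ, Ã, Y) equals the joint distribution of (Ŷ, A, Y). -/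
/- ## Auxiliary lemmas -/

lemma pr_fiber {Ω S : Type*} [Fintype Ω] [Fintype S] [DecidableEq S] (p : Ω → ℝ)
    (g : Ω → S) (P : S → Prop) [DecidablePred P] (E : Set Ω)
    (hE : ∀ ω, ω ∈ E ↔ P (g ω)) :
    Pr p E = ∑ s, if P s then Pr p {ω | g ω = s} else 0 := by
  classical
  unfold Pr
  simp only [Set.indicator_apply, Set.mem_setOf_eq]
  have h1 : ∀ s : S, (if P s then ∑ ω, (if g ω = s then p ω else 0) else 0)
      = ∑ ω, (if g ω = s ∧ P s then p ω else 0) := by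
    intro s
    split_ifs with h
    · exact Finset.sum_congr rfl fun ω _ => by simp [h]
    · simp [h]
  simp only [h1]
  rw [Finset.sum_comm]
  refine Finset.sum_congr rfl fun ω _ => ?_
  rw [Finset.sum_eq_single (g ω)]
  · by_cases h : P (g ω) <;> simp [hE ω, h]
  · intro s _ hs; simp [Ne.symm hs]
  · simp

lemma sum_ite_prod {𝒳 𝒴' : Type*} [Fintype 𝒳] [DecidableEq 𝒴'] {n : ℕ}
    (f : 𝒳 → 𝒴') (yh : Fin n → 𝒴') (w : Fin n → 𝒳 → ℝ) :
    (∑ x : Fin n → 𝒳, if (fun i => f (x i)) = yh then ∏ i, w i (x i) else 0)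
      = ∏ i, ∑ x0, (if f x0 = yh i then w i x0 else 0) := by
  classical
  rw [Finset.prod_univ_sum, Fintype.piFinset_univ]
  refine Finset.sum_congr rfl fun x _ => ?_
  by_cases h : (fun i => f (x i)) = yh
  · rw [if_pos h]
    refine Finset.prod_congr rfl fun i _ => (if_pos (congrFun h i)).symm
  · rw [if_neg h]
    have : ∃ i, f (x i) ≠ yh i := by
      by_contra hc; push_neg at hc; exact h (funext hc)
    obtain ⟨i, hi⟩ := this
    exact (Finset.prod_eq_zero (Finset.mem_univ i)
      (show (if f (x i) = yh i then w i (x i) else 0) = 0 from if_neg hi)).symm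

lemma collapse2 {α β : Type*} [Fintype α] [Fintype β] [DecidableEq α] [DecidableEq β]
    (C : Prop) [Decidable C] (a0 : α) (b0 : β) (v : α → β → ℝ) :
    (∑ a : α, ∑ b : β, if (C ∧ a = a0 ∧ b = b0) then v a b else 0) = if C then v a0 b0 else 0 := by
  rw [Finset.sum_eq_single a0]
  · rw [Finset.sum_eq_single b0]
    · simp
    · intro b _ hb; simp [hb]
    · simp
  · intro a1 _ ha; exact Finset.sum_eq_zero fun b _ => by simp [ha]
  · simp

lemma collapse_perm {𝒜 β : Type*} [Fintype 𝒜] [DecidableEq 𝒜] [Fintype β] [DecidableEq β] {n : ℕ}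
    (C : Prop) [Decidable C] (π : Equiv.Perm (Fin n)) (a : Fin n → 𝒜) (b0 : β)
    (v : (Fin n → 𝒜) → β → ℝ) :
    (∑ a' : Fin n → 𝒜, ∑ b : β, if (C ∧ (fun i => a' (π i)) = a ∧ b = b0) then v a' b else 0)
      = if C then v (fun k => a (π⁻¹ k)) b0 else 0 := by
  rw [Finset.sum_eq_single (fun k => a (π⁻¹ k))]
  · rw [Finset.sum_eq_single b0]
    · have h : (fun i => a (π⁻¹ (π i))) = a := by funext i; simp
      simp only [h]
      simp
    · intro b _ hb; simp [hb]
    · simp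
  · intro a' _ ha'
    refine Finset.sum_eq_zero fun b _ => ?_
    have h : ¬((fun i => a' (π i)) = a) := by
      intro h
      apply ha'
      funext k
      have := congrFun h (π⁻¹ k)
      simpa using this
    simp [h]
  · simp

lemma mul_sum_ite {ι : Type*} [Fintype ι] (c : ℝ) (C : ι → Prop) [DecidablePred C] (v : ι → ℝ) :
    (∑ x : ι, if C x then c * v x else 0) = c * ∑ x : ι, if C x then v x else 0 := by
  rw [Finset.mul_sum]
  exact Finset.sum_congr rfl fun x _ => by split_ifs <;> simp

lemma icp_eq {𝒜 𝒴 : Type*} {n : ℕ} (q : 𝒴 → 𝒜 → ℝ) (a : Fin n → 𝒜) (y : Fin n → 𝒴)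
    (π : Equiv.Perm (Fin n)) :
    ICPweight q (fun k => a (π⁻¹ k)) y π
      = (∏ i, q (y i) (a i)) / ∑ π' : Equiv.Perm (Fin n), ∏ i, q (y (π'⁻¹ i)) (a i) := by
  unfold ICPweight
  congr 1
  · exact Equiv.prod_comp (π⁻¹ : Equiv.Perm (Fin n)) (fun i => q (y i) (a i))
  · refine Fintype.sum_equiv (Equiv.mulLeft π⁻¹) _ _ fun π' => ?_
    rw [← Equiv.prod_comp π (fun k => q (y (π'⁻¹ k)) (a (π⁻¹ k)))]
    refine Finset.prod_congr rfl fun i _ => ?_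
    simp [mul_inv_rev, Equiv.Perm.mul_apply]

lemma final_algebra {𝒳 𝒜 𝒴 𝒴' : Type*} [Fintype 𝒳] [Fintype 𝒜] [Fintype 𝒴]
    [DecidableEq 𝒴'] [Nonempty 𝒜] [Nonempty 𝒴]
    (j : 𝒳 → 𝒜 → 𝒴 → ℝ) (hmarg : ∀ b y0, 0 < ∑ x, j x b y0)
    (q : 𝒴 → 𝒜 → ℝ) (hq : ∀ y0 b, q y0 b = (∑ x, j x b y0) / ∑ x, ∑ y', j x b y')
    (f : 𝒳 → 𝒴')
    (hEO : ∀ (b : 𝒴') (a0 : 𝒜) (y0 : 𝒴),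
      (∑ x, Set.indicator {x' | f x' = b} (fun x' => j x' a0 y0) x) *
          (∑ x, ∑ a', j x a' y0)
        = (∑ x, ∑ a', Set.indicator {x' | f x' = b} (fun x' => j x' a' y0) x) *
          (∑ x, j x a0 y0))
    {n : ℕ} (yh : Fin n → 𝒴') (a : Fin n → 𝒜) (y : Fin n → 𝒴) :
    (∑ π : Equiv.Perm (Fin n),
      ((∏ i, q (y i) (a i)) / ∑ π' : Equiv.Perm (Fin n), ∏ i, q (y (π'⁻¹ i)) (a i)) *
        ∏ i, ∑ x0, (if f x0 = yh i then j x0 (a (π⁻¹ i)) (y i) else 0))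
      = ∏ i, ∑ x0, (if f x0 = yh i then j x0 (a i) (y i) else 0) := by
  classical
  have tpos : ∀ a0 : 𝒜, 0 < ∑ x, ∑ y', j x a0 y' := by
    intro a0
    rw [Finset.sum_comm]
    exact Finset.sum_pos (fun y1 _ => hmarg a0 y1) Finset.univ_nonempty
  have spos : ∀ y0 : 𝒴, 0 < ∑ x, ∑ a', j x a' y0 := by
    intro y0
    rw [Finset.sum_comm]
    exact Finset.sum_pos (fun a1 _ => hmarg a1 y0) Finset.univ_nonempty
  have qpos : ∀ y0 a0, 0 < q y0 a0 := fun y0 a0 => by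
    rw [hq]; exact div_pos (hmarg a0 y0) (tpos a0)
  have hmq : ∀ (a0 : 𝒜) (y0 : 𝒴), q y0 a0 * (∑ x, ∑ y', j x a0 y') = ∑ x, j x a0 y0 := by
    intro a0 y0
    rw [hq]
    exact div_mul_cancel₀ _ (tpos a0).ne'
  have hEO' : ∀ (b : 𝒴') (a0 : 𝒜) (y0 : 𝒴),
      (∑ x, if f x = b then j x a0 y0 else 0) * (∑ x, ∑ a', j x a' y0)
        = (∑ x, ∑ a', if f x = b then j x a' y0 else 0) * (∑ x, j x a0 y0) := by
    intro b a0 y0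
    have h := hEO b a0 y0
    simpa only [Set.indicator_apply, Set.mem_setOf_eq] using h
  have hG : ∀ (b : 𝒴') (a0 : 𝒜) (y0 : 𝒴),
      (∑ x, if f x = b then j x a0 y0 else 0)
        = ((∑ x, ∑ a', if f x = b then j x a' y0 else 0) / (∑ x, ∑ a', j x a' y0))
            * (q y0 a0 * (∑ x, ∑ y', j x a0 y')) := by
    intro b a0 y0
    rw [hmq a0 y0, div_mul_eq_mul_div, eq_div_iff (spos y0).ne']
    exact hEO' b a0 y0
  have hprod : ∀ a0 : Fin n → 𝒜,
      (∏ i, ∑ x0, if f x0 = yh i then j x0 (a0 i) (y i) else 0)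
        = (∏ i, ((∑ x0, ∑ a', if f x0 = yh i then j x0 a' (y i) else 0)
              / (∑ x0, ∑ a', j x0 a' (y i))))
          * ((∏ i, q (y i) (a0 i)) * (∏ i, ∑ x0, ∑ y', j x0 (a0 i) y')) := by
    intro a0
    rw [← Finset.prod_mul_distrib, ← Finset.prod_mul_distrib]
    exact Finset.prod_congr rfl fun i _ => hG (yh i) (a0 i) (y i)
  have hT : ∀ π : Equiv.Perm (Fin n),
      (∏ i, ∑ x0, ∑ y', j x0 (a (π⁻¹ i)) y') = ∏ i, ∑ x0, ∑ y', j x0 (a i) y' :=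
    fun π => Equiv.prod_comp (π⁻¹ : Equiv.Perm (Fin n)) (fun k => ∑ x0, ∑ y', j x0 (a k) y')
  have hsum : (∑ π : Equiv.Perm (Fin n), ∏ i, q (y i) (a (π⁻¹ i)))
      = ∑ π' : Equiv.Perm (Fin n), ∏ i, q (y (π'⁻¹ i)) (a i) := by
    refine Fintype.sum_equiv (Equiv.inv (Equiv.Perm (Fin n))) _ _ fun π => ?_
    rw [← Equiv.prod_comp π (fun k => q (y k) (a (π⁻¹ k)))]
    exact Finset.prod_congr rfl fun i _ => by simp
  have Dpos : 0 < ∑ π' : Equiv.Perm (Fin n), ∏ i, q (y (π'⁻¹ i)) (a i) := by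
    have : Nonempty (Equiv.Perm (Fin n)) := ⟨1⟩
    exact Finset.sum_pos
      (fun π' _ => Finset.prod_pos fun i _ => qpos (y (π'⁻¹ i)) (a i))
      Finset.univ_nonempty
  have hstep : ∀ π : Equiv.Perm (Fin n),
      (((∏ i, q (y i) (a i)) / ∑ π' : Equiv.Perm (Fin n), ∏ i, q (y (π'⁻¹ i)) (a i)) *
        ∏ i, ∑ x0, (if f x0 = yh i then j x0 (a (π⁻¹ i)) (y i) else 0))
      = (∏ i, q (y i) (a (π⁻¹ i))) *
          (((∏ i, q (y i) (a i)) / ∑ π' : Equiv.Perm (Fin n), ∏ i, q (y (π'⁻¹ i)) (a i)) *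
            ((∏ i, ((∑ x0, ∑ a', if f x0 = yh i then j x0 a' (y i) else 0)
              / (∑ x0, ∑ a', j x0 a' (y i))))
             * (∏ i, ∑ x0, ∑ y', j x0 (a i) y'))) := by
    intro π
    have h := hprod (fun k => a (π⁻¹ k))
    rw [h, hT π]
    ring
  simp only [hstep]
  rw [← Finset.sum_mul, hsum, hprod a]
  have key : ∀ (D Q C T : ℝ), D ≠ 0 → D * (Q / D * (C * T)) = C * (Q * T) := by
    intros D Q C T hD; field_simp
  exact key _ _ _ _ Dpos.ne'

/-- Theorem 2.1, part (1): if `(X_i, A_i, Y_i)` are i.i.d. with joint pmf `j`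
whose `(A,Y)`-marginal is strictly positive, `q(y|a) = P(Y₁ = y | A₁ = a)`, `Ŷᵢ = f(Xᵢ)`,
`Π` has the ICP conditional distribution given `(A, Y)` (independent of `X` given `(A,Y)`),
`Ã = A_Π`, and `f(X₁) ⟂ A₁ ∣ Y₁` (equalized odds), then the joint law of the n-tuples
`(Ŷ, Ã, Y)` equals the joint law of `(Ŷ, A, Y)`. -/
theorem stmt_4 {Ω 𝒳 𝒜 𝒴 𝒴' : Type*} [Fintype Ω] [Fintype 𝒳] [Fintype 𝒜] [Fintype 𝒴']
    [Fintype 𝒴]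
    (p : Ω → ℝ) (hp0 : ∀ ω, 0 ≤ p ω) (hp1 : ∑ ω, p ω = 1)
    (j : 𝒳 → 𝒜 → 𝒴 → ℝ) (hj0 : ∀ x b y0, 0 ≤ j x b y0)
    (hj1 : ∑ x, ∑ b, ∑ y0, j x b y0 = 1)
    (hmarg : ∀ b y0, 0 < ∑ x, j x b y0)
    {n : ℕ} (hn : 1 ≤ n)
    (X : Ω → Fin n → 𝒳) (A : Ω → Fin n → 𝒜) (Y : Ω → Fin n → 𝒴)
    (Prm : Ω → Equiv.Perm (Fin n)) (f : 𝒳 → 𝒴')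
    (q : 𝒴 → 𝒜 → ℝ) (hq : ∀ y0 b, q y0 b = (∑ x, j x b y0) / ∑ x, ∑ y', j x b y')
    (hiid : ∀ (x : Fin n → 𝒳) (a : Fin n → 𝒜) (y : Fin n → 𝒴),
      Pr p {ω | X ω = x ∧ A ω = a ∧ Y ω = y} = ∏ i, j (x i) (a i) (y i))
    (hPrm : ∀ (x : Fin n → 𝒳) (a : Fin n → 𝒜) (y : Fin n → 𝒴) (π : Equiv.Perm (Fin n)),
      Pr p {ω | Prm ω = π ∧ X ω = x ∧ A ω = a ∧ Y ω = y}
        = ICPweight q a y π * Pr p {ω | X ω = x ∧ A ω = a ∧ Y ω = y})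
    (hEO : ∀ (b : 𝒴') (a0 : 𝒜) (y0 : 𝒴),
      (∑ x, Set.indicator {x' | f x' = b} (fun x' => j x' a0 y0) x) *
          (∑ x, ∑ a', j x a' y0)
        = (∑ x, ∑ a', Set.indicator {x' | f x' = b} (fun x' => j x' a' y0) x) *
          (∑ x, j x a0 y0))
    (yh : Fin n → 𝒴') (a : Fin n → 𝒜) (y : Fin n → 𝒴) :
    Pr p {ω | (fun i => f (X ω i)) = yh ∧ (fun i => A ω (Prm ω i)) = a ∧ Y ω = y}
      = Pr p {ω | (fun i => f (X ω i)) = yh ∧ A ω = a ∧ Y ω = y} := by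
  classical
  haveI : Nonempty 𝒜 := ⟨a ⟨0, hn⟩⟩
  haveI : Nonempty 𝒴 := ⟨y ⟨0, hn⟩⟩
  have hset : ∀ (x : Fin n → 𝒳) (a' : Fin n → 𝒜) (y' : Fin n → 𝒴),
      {ω | (X ω, A ω, Y ω) = (x, a', y')} = {ω | X ω = x ∧ A ω = a' ∧ Y ω = y'} := by
    intro x a' y'; ext ω; simp [Prod.ext_iff]
  have hset4 : ∀ (π : Equiv.Perm (Fin n)) (x : Fin n → 𝒳) (a' : Fin n → 𝒜) (y' : Fin n → 𝒴),
      {ω | (Prm ω, X ω, A ω, Y ω) = (π, x, a', y')}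
        = {ω | Prm ω = π ∧ X ω = x ∧ A ω = a' ∧ Y ω = y'} := by
    intro π x a' y'; ext ω; simp [Prod.ext_iff, and_assoc]
  have hR : Pr p {ω | (fun i => f (X ω i)) = yh ∧ A ω = a ∧ Y ω = y}
      = ∏ i, ∑ x0, (if f x0 = yh i then j x0 (a i) (y i) else 0) := by
    have h := pr_fiber p (fun ω => (X ω, A ω, Y ω))
        (fun s => (fun i => f (s.1 i)) = yh ∧ s.2.1 = a ∧ s.2.2 = y)
        {ω | (fun i => f (X ω i)) = yh ∧ A ω = a ∧ Y ω = y} (fun ω => Iff.rfl)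
    rw [h]
    simp only [Fintype.sum_prod_type]
    have hcol : ∀ x : Fin n → 𝒳,
        (∑ a' : Fin n → 𝒜, ∑ y' : Fin n → 𝒴,
          if ((fun i => f (x i)) = yh ∧ a' = a ∧ y' = y)
          then Pr p {ω | (X ω, A ω, Y ω) = (x, a', y')} else 0)
        = if (fun i => f (x i)) = yh then ∏ i, j (x i) (a i) (y i) else 0 := by
      intro x
      rw [collapse2 ((fun i => f (x i)) = yh) a y]
      rw [hset, hiid]
    simp only [hcol]
    exact sum_ite_prod f yh (fun i x0 => j x0 (a i) (y i))
  have hL : Pr p {ω | (fun i => f (X ω i)) = yh ∧ (fun i => A ω (Prm ω i)) = a ∧ Y ω = y}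
      = ∑ π : Equiv.Perm (Fin n),
          ((∏ i, q (y i) (a i)) / ∑ π' : Equiv.Perm (Fin n), ∏ i, q (y (π'⁻¹ i)) (a i)) *
            ∏ i, ∑ x0, (if f x0 = yh i then j x0 (a (π⁻¹ i)) (y i) else 0) := by
    have h := pr_fiber p (fun ω => (Prm ω, X ω, A ω, Y ω))
        (fun s => (fun i => f (s.2.1 i)) = yh ∧ (fun i => s.2.2.1 (s.1 i)) = a ∧ s.2.2.2 = y)
        {ω | (fun i => f (X ω i)) = yh ∧ (fun i => A ω (Prm ω i)) = a ∧ Y ω = y}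
        (fun ω => Iff.rfl)
    rw [h]
    simp only [Fintype.sum_prod_type]
    refine Finset.sum_congr rfl fun π _ => ?_
    have hcol : ∀ x : Fin n → 𝒳,
        (∑ a' : Fin n → 𝒜, ∑ y' : Fin n → 𝒴,
          if ((fun i => f (x i)) = yh ∧ (fun i => a' (π i)) = a ∧ y' = y)
          then Pr p {ω | (Prm ω, X ω, A ω, Y ω) = (π, x, a', y')} else 0)
        = if (fun i => f (x i)) = yh
          then ((∏ i, q (y i) (a i)) / ∑ π' : Equiv.Perm (Fin n), ∏ i, q (y (π'⁻¹ i)) (a i))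
                * ∏ i, j (x i) (a (π⁻¹ i)) (y i) else 0 := by
      intro x
      rw [collapse_perm ((fun i => f (x i)) = yh) π a y]
      rw [hset4, hPrm, hiid, icp_eq]
    simp only [hcol]
    have h2 := mul_sum_ite
        ((∏ i, q (y i) (a i)) / ∑ π' : Equiv.Perm (Fin n), ∏ i, q (y (π'⁻¹ i)) (a i))
        (fun x : Fin n → 𝒳 => (fun i => f (x i)) = yh)
        (fun x => ∏ i, j (x i) (a (π⁻¹ i)) (y i))
    rw [h2]
    exact congrArg _ (sum_ite_prod f yh (fun i x0 => j x0 (a (π⁻¹ i)) (y i)))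
  rw [hL, hR]
  exact final_algebra j hmarg q hq f hEO yh a y
end

section
/- Let 𝒳, 𝒜, 𝒴, 𝒴' be finite sets, and let (X_1,A_1,Y_1),…,(X_n,A_n,Y_n) be i.i.d. from a joint probability mass function on 𝒳 × 𝒜 × 𝒴 whose (A,Y)-marginal is strictly positive; let q(y|a) = P(Y_1 = y | A_1 = a). Let f : 𝒳 → 𝒴', Ŷ_i = f(X_i), let Π be a random permutation whose conditional distribution given (A,Y) (and independent of X given (A,Y)) is the ICP distribution with density q, and set Ã = A_Π. If the joint distribution of the n-tuples (Ŷ, A, Y) equals that of (Ŷ, Ã, Y), then Ŷ and A are conditionally independent given (Y, S(A)): for all ŷ ∈ (𝒴')ⁿ, a ∈ 𝒜ⁿ, y ∈ 𝒴ⁿ with P(Y = y, S(A) = S(a)) > 0, P(Ŷ = ŷ, A = a | Y = y, S(A) = S(a)) = P(Ŷ = ŷ | Y = y, S(A) = S(a)) · P(A = a | Y = y, S(A) = S(a)). -/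
/-!
The ICP weight is invariant under relabelling, so conditionally on `Π = π` and `A = a ∘ π⁻¹`
the permutation has the same weight `c = ICPweight q a y 1` for every `π`. Since `Ã = a` means
`A = a ∘ Π⁻¹`, the hypothesis `(Ŷ, A, Y) ~ (Ŷ, Ã, Y)` gives
`P(Ŷ = v, A = a, Y = y) = c · ∑_π P(Ŷ = v, A = a ∘ π, Y = y)`, and the sum over `π` counts each
rearrangement `a'` of `a` exactly `|Stab a|` times. Hence
`P(Ŷ = v, A = a, Y = y) = c · |Stab a| · P(Ŷ = v, Y = y, S(A) = S(a))` with a factor independent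
of `v`, which is the conditional independence of `Ŷ` and `A` given `(Y, S(A))`.
-/

open Finset

section Probability

variable {Ω α β γ : Type*} [Fintype Ω] (p : Ω → ℝ)

lemma Pr_eq_sum_fiber [Fintype α] (X : Ω → α) (E : Set Ω) :
    Pr p E = ∑ x, Pr p {ω | X ω = x ∧ ω ∈ E} := by
  classical
  simp only [Pr, Set.indicator_apply, Set.mem_ofPred_eq]
  rw [sum_comm]
  refine sum_congr rfl fun ω _ => ?_
  simp [ite_and]

lemma Pr_comp_eq_sum [Fintype α] [DecidableEq β] (X : Ω → α) (g : α → β) (b : β)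
    (E : Set Ω) :
    Pr p {ω | g (X ω) = b ∧ ω ∈ E} = ∑ x with g x = b, Pr p {ω | X ω = x ∧ ω ∈ E} := by
  rw [Pr_eq_sum_fiber p X, sum_filter]
  refine sum_congr rfl fun x _ => ?_
  split_ifs with hx
  · exact congrArg (Pr p) (Set.ext fun ω => ⟨fun h => ⟨h.1, h.2.2⟩, fun h => ⟨h.1, h.1 ▸ hx, h.2⟩⟩)
  · refine sum_eq_zero fun ω _ => Set.indicator_of_notMem ?_ p
    rintro ⟨rfl, hb, -⟩
    exact hx hb

lemma Pr_and_comp_eq_mul [Fintype α] (X : Ω → α) (P : Ω → Prop) (E : Set Ω) (c : ℝ)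
    (h : ∀ x, Pr p {ω | P ω ∧ X ω = x ∧ ω ∈ E} = c * Pr p {ω | X ω = x ∧ ω ∈ E})
    (g : α → β) (b : β) :
    Pr p {ω | P ω ∧ g (X ω) = b ∧ ω ∈ E} = c * Pr p {ω | g (X ω) = b ∧ ω ∈ E} := by
  classical
  have hP : {ω | P ω ∧ g (X ω) = b ∧ ω ∈ E} = {ω | g (X ω) = b ∧ ω ∈ {ω | P ω ∧ ω ∈ E}} :=
    Set.ext fun _ => and_left_comm
  rw [hP, Pr_comp_eq_sum, Pr_comp_eq_sum, mul_sum]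
  exact sum_congr rfl fun x _ => (congrArg (Pr p) (Set.ext fun _ => and_left_comm)).trans (h x)

lemma condIndep_of_factorization [Fintype β] (U : Ω → β) (W : Ω → γ) (w : γ) (B : Set Ω)
    (C : ℝ) (h : ∀ u, Pr p {ω | U ω = u ∧ W ω = w ∧ ω ∈ B} = C * Pr p {ω | U ω = u ∧ ω ∈ B})
    (u : β) :
    Pr p {ω | U ω = u ∧ W ω = w ∧ ω ∈ B} / Pr p B
      = Pr p {ω | U ω = u ∧ ω ∈ B} / Pr p B * (Pr p {ω | W ω = w ∧ ω ∈ B} / Pr p B) := by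
  have hW : Pr p {ω | W ω = w ∧ ω ∈ B} = C * Pr p B := by
    rw [Pr_eq_sum_fiber p U, Pr_eq_sum_fiber p U B, mul_sum]
    exact sum_congr rfl fun u _ => h u
  rw [h, hW]
  rcases eq_or_ne (Pr p B) 0 with hB | hB
  · simp [hB]
  · field_simp

end Probability

section Permutations

variable {α : Type*} {n : ℕ}

lemma multisetOf_eq_coe_ofFn (v : Fin n → α) : multisetOf v = ↑(List.ofFn v) := by
  simp [multisetOf, List.ofFn_eq_map, Fin.univ_def]

lemma multisetOf_eq_iff_exists_perm {a a' : Fin n → α} :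
    multisetOf a' = multisetOf a ↔ ∃ σ : Equiv.Perm (Fin n), a ∘ σ = a' := by
  simp only [multisetOf_eq_coe_ofFn, Multiset.coe_eq_coe]
  constructor
  · intro h
    -- any linear order will do: both tuples sort to the same list
    let _ : LinearOrder α := IsWellOrder.linearOrder WellOrderingRel
    have hsorted : a ∘ Tuple.sort a = a' ∘ Tuple.sort a' := by
      refine List.ofFn_injective (List.Perm.eq_of_sortedLE
        (List.sortedLE_ofFn_iff.mpr (Tuple.monotone_sort a))
        (List.sortedLE_ofFn_iff.mpr (Tuple.monotone_sort a')) ?_)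
      exact ((Tuple.sort a).ofFn_comp_perm a).trans
        (h.symm.trans ((Tuple.sort a').ofFn_comp_perm a').symm)
    refine ⟨(Tuple.sort a').symm.trans (Tuple.sort a), ?_⟩
    rw [Equiv.coe_trans, ← Function.comp_assoc, hsorted, Function.comp_assoc,
      Equiv.self_comp_symm, Function.comp_id]
  · rintro ⟨σ, rfl⟩
    exact σ.ofFn_comp_perm a

variable [DecidableEq α]

lemma card_filter_comp_perm_eq (a a' : Fin n → α) :
    #{π : Equiv.Perm (Fin n) | a ∘ π = a'}
      = if multisetOf a' = multisetOf a then #{π : Equiv.Perm (Fin n) | a ∘ π = a} else 0 := by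
  split_ifs with h
  · obtain ⟨τ, rfl⟩ := multisetOf_eq_iff_exists_perm.mp h
    refine card_equiv (Equiv.mulRight τ⁻¹) fun π => ?_
    simp only [mem_filter, mem_univ, true_and, Equiv.coe_mulRight, Equiv.Perm.coe_mul,
      Equiv.Perm.coe_inv, ← Function.comp_assoc, Equiv.comp_symm_eq]
  · refine card_eq_zero.mpr (filter_eq_empty_iff.mpr fun π _ hπ => h ?_)
    exact multisetOf_eq_iff_exists_perm.mpr ⟨π, hπ⟩

lemma sum_perm_comp_eq_card_stabilizer_smul [Fintype α] {M : Type*} [AddCommMonoid M]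
    (a : Fin n → α) (F : (Fin n → α) → M) :
    ∑ π : Equiv.Perm (Fin n), F (a ∘ π)
      = #{π : Equiv.Perm (Fin n) | a ∘ π = a} • ∑ a' with multisetOf a' = multisetOf a, F a' := by
  rw [← sum_fiberwise univ (fun π : Equiv.Perm (Fin n) => a ∘ π), smul_sum, sum_filter]
  refine sum_congr rfl fun a' _ => ?_
  rw [sum_congr rfl fun π hπ => congrArg F (mem_filter.mp hπ).2, sum_const,
    card_filter_comp_perm_eq, ite_smul, zero_smul]

end Permutations

lemma ICPweight_comp_inv {𝒜 𝒴 : Type*} {n : ℕ} (q : 𝒴 → 𝒜 → ℝ) (a : Fin n → 𝒜)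
    (y : Fin n → 𝒴) (π : Equiv.Perm (Fin n)) :
    ICPweight q (a ∘ ⇑π⁻¹) y π = ICPweight q a y 1 := by
  unfold ICPweight
  congr 1
  · simpa using Equiv.prod_comp π⁻¹ fun i => q (y i) (a i)
  · refine Fintype.sum_equiv (Equiv.mulLeft π⁻¹) _ _ fun σ => ?_
    simpa [mul_inv_rev] using (Equiv.prod_comp π fun i => q (y (σ⁻¹ i)) (a (π⁻¹ i))).symm

section PermutedSample

variable {Ω α β 𝒜 𝒴 : Type*} [Fintype Ω] (p : Ω → ℝ) {n : ℕ}

lemma Pr_and_comp_perm_eq_ICPweight_mul_sum [Fintype α] (X : Ω → α) (A : Ω → Fin n → 𝒜)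
    (Prm : Ω → Equiv.Perm (Fin n)) (E : Set Ω) (q : 𝒴 → 𝒜 → ℝ) (y : Fin n → 𝒴)
    (hPrm : ∀ x a π, Pr p {ω | Prm ω = π ∧ X ω = x ∧ A ω = a ∧ ω ∈ E}
      = ICPweight q a y π * Pr p {ω | X ω = x ∧ A ω = a ∧ ω ∈ E})
    (g : α → β) (v : β) (a : Fin n → 𝒜) :
    Pr p {ω | g (X ω) = v ∧ A ω ∘ Prm ω = a ∧ ω ∈ E}
      = ICPweight q a y 1
        * ∑ π : Equiv.Perm (Fin n), Pr p {ω | g (X ω) = v ∧ A ω = a ∘ π ∧ ω ∈ E} := by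
  rw [Pr_eq_sum_fiber p Prm, mul_sum, ← Equiv.sum_comp (Equiv.inv (Equiv.Perm (Fin n)))
    (fun π => ICPweight q a y 1 * Pr p {ω | g (X ω) = v ∧ A ω = a ∘ π ∧ ω ∈ E})]
  refine sum_congr rfl fun π _ => ?_
  rw [Equiv.inv_apply, ← ICPweight_comp_inv q a y π]
  refine (congrArg (Pr p) (Set.ext fun ω => and_congr_right ?_)).trans
    (Pr_and_comp_eq_mul p X (Prm · = π) {ω | A ω = a ∘ ⇑π⁻¹ ∧ ω ∈ E} _ (fun x => hPrm x _ π) g v)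
  rintro rfl
  simp only [Set.mem_ofPred_eq, Equiv.Perm.coe_inv, Equiv.eq_comp_symm]

lemma sum_perm_Pr_eq_card_stabilizer_mul [Fintype 𝒜] [DecidableEq 𝒜] (U : Ω → β)
    (A : Ω → Fin n → 𝒜) (E : Set Ω) (u : β) (a : Fin n → 𝒜) :
    ∑ π : Equiv.Perm (Fin n), Pr p {ω | U ω = u ∧ A ω = a ∘ π ∧ ω ∈ E}
      = #{π : Equiv.Perm (Fin n) | a ∘ π = a}
        * Pr p {ω | U ω = u ∧ ω ∈ E ∧ multisetOf (A ω) = multisetOf a} := by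
  rw [sum_perm_comp_eq_card_stabilizer_smul a (fun a' => Pr p {ω | U ω = u ∧ A ω = a' ∧ ω ∈ E}),
    nsmul_eq_mul]
  have hS : {ω | U ω = u ∧ ω ∈ E ∧ multisetOf (A ω) = multisetOf a}
      = {ω | multisetOf (A ω) = multisetOf a ∧ ω ∈ {ω | U ω = u ∧ ω ∈ E}} :=
    Set.ext fun _ => and_rotate.symm
  rw [hS, Pr_comp_eq_sum]
  exact congrArg _ (sum_congr rfl fun _ _ => congrArg (Pr p) (Set.ext fun _ => and_left_comm))

end PermutedSample

theorem stmt_5_general {Ω 𝒳 𝒜 𝒴 𝒴' : Type*} [Fintype Ω] [Fintype 𝒳] [Fintype 𝒜] [Fintype 𝒴']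
    (p : Ω → ℝ)
    {n : ℕ}
    (X : Ω → Fin n → 𝒳) (A : Ω → Fin n → 𝒜) (Y : Ω → Fin n → 𝒴)
    (Prm : Ω → Equiv.Perm (Fin n)) (f : 𝒳 → 𝒴')
    (q : 𝒴 → 𝒜 → ℝ)
    (hPrm : ∀ (x : Fin n → 𝒳) (a : Fin n → 𝒜) (y : Fin n → 𝒴) (π : Equiv.Perm (Fin n)),
      Pr p {ω | Prm ω = π ∧ X ω = x ∧ A ω = a ∧ Y ω = y}
        = ICPweight q a y π * Pr p {ω | X ω = x ∧ A ω = a ∧ Y ω = y})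
    (hdist : ∀ (yh : Fin n → 𝒴') (a : Fin n → 𝒜) (y : Fin n → 𝒴),
      Pr p {ω | (fun i => f (X ω i)) = yh ∧ A ω = a ∧ Y ω = y}
        = Pr p {ω | (fun i => f (X ω i)) = yh ∧ (fun i => A ω (Prm ω i)) = a ∧ Y ω = y})
    (yh : Fin n → 𝒴') (a : Fin n → 𝒜) (y : Fin n → 𝒴) :
    Pr p {ω | (fun i => f (X ω i)) = yh ∧ A ω = a ∧ Y ω = y ∧
          multisetOf (A ω) = multisetOf a} /
        Pr p {ω | Y ω = y ∧ multisetOf (A ω) = multisetOf a}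
      = (Pr p {ω | (fun i => f (X ω i)) = yh ∧ Y ω = y ∧
            multisetOf (A ω) = multisetOf a} /
          Pr p {ω | Y ω = y ∧ multisetOf (A ω) = multisetOf a})
        * (Pr p {ω | A ω = a ∧ Y ω = y ∧ multisetOf (A ω) = multisetOf a} /
          Pr p {ω | Y ω = y ∧ multisetOf (A ω) = multisetOf a}) := by
  classical
  refine condIndep_of_factorization p (fun ω i => f (X ω i)) A a
    {ω | Y ω = y ∧ multisetOf (A ω) = multisetOf a}
    (ICPweight q a y 1 * #{π : Equiv.Perm (Fin n) | a ∘ π = a}) (fun v => ?_) yh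
  calc Pr p {ω | (fun i => f (X ω i)) = v ∧ A ω = a ∧ Y ω = y ∧ multisetOf (A ω) = multisetOf a}
      = Pr p {ω | (fun i => f (X ω i)) = v ∧ (fun i => A ω (Prm ω i)) = a ∧ Y ω = y} := by
        rw [← hdist]
        exact congrArg (Pr p) (Set.ext fun ω => by grind)
    _ = ICPweight q a y 1 * ∑ π : Equiv.Perm (Fin n),
          Pr p {ω | (fun i => f (X ω i)) = v ∧ A ω = a ∘ π ∧ Y ω = y} :=
        Pr_and_comp_perm_eq_ICPweight_mul_sum p X A Prm {ω | Y ω = y} q y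
          (fun x a' π => hPrm x a' y π) (fun x i => f (x i)) v a
    _ = _ := by
        rw [mul_assoc]
        exact congrArg _ (sum_perm_Pr_eq_card_stabilizer_mul p _ A {ω | Y ω = y} v a)

/-- Theorem 2.1, first claim of part (2): in the i.i.d. + ICP setting, if the
joint law of the n-tuples `(Ŷ, A, Y)` equals that of `(Ŷ, Ã, Y)` (where `Ã = A_Π`), then
`Ŷ` and `A` are conditionally independent given `(Y, S(A))`:
`P(Ŷ = yh, A = a | Y = y, S(A) = S(a))`
`= P(Ŷ = yh | Y = y, S(A) = S(a)) · P(A = a | Y = y, S(A) = S(a))`. -/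
theorem stmt_5 {Ω 𝒳 𝒜 𝒴 𝒴' : Type*} [Fintype Ω] [Fintype 𝒳] [Fintype 𝒜] [Fintype 𝒴']
    [Fintype 𝒴]
    (p : Ω → ℝ) (hp0 : ∀ ω, 0 ≤ p ω) (hp1 : ∑ ω, p ω = 1)
    (j : 𝒳 → 𝒜 → 𝒴 → ℝ) (hj0 : ∀ x b y0, 0 ≤ j x b y0)
    (hj1 : ∑ x, ∑ b, ∑ y0, j x b y0 = 1)
    (hmarg : ∀ b y0, 0 < ∑ x, j x b y0)
    {n : ℕ} (hn : 1 ≤ n)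
    (X : Ω → Fin n → 𝒳) (A : Ω → Fin n → 𝒜) (Y : Ω → Fin n → 𝒴)
    (Prm : Ω → Equiv.Perm (Fin n)) (f : 𝒳 → 𝒴')
    (q : 𝒴 → 𝒜 → ℝ) (hq : ∀ y0 b, q y0 b = (∑ x, j x b y0) / ∑ x, ∑ y', j x b y')
    (hiid : ∀ (x : Fin n → 𝒳) (a : Fin n → 𝒜) (y : Fin n → 𝒴),
      Pr p {ω | X ω = x ∧ A ω = a ∧ Y ω = y} = ∏ i, j (x i) (a i) (y i))
    (hPrm : ∀ (x : Fin n → 𝒳) (a : Fin n → 𝒜) (y : Fin n → 𝒴) (π : Equiv.Perm (Fin n)),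
      Pr p {ω | Prm ω = π ∧ X ω = x ∧ A ω = a ∧ Y ω = y}
        = ICPweight q a y π * Pr p {ω | X ω = x ∧ A ω = a ∧ Y ω = y})
    (hdist : ∀ (yh : Fin n → 𝒴') (a : Fin n → 𝒜) (y : Fin n → 𝒴),
      Pr p {ω | (fun i => f (X ω i)) = yh ∧ A ω = a ∧ Y ω = y}
        = Pr p {ω | (fun i => f (X ω i)) = yh ∧ (fun i => A ω (Prm ω i)) = a ∧ Y ω = y})
    (yh : Fin n → 𝒴') (a : Fin n → 𝒜) (y : Fin n → 𝒴)
    (hpos : 0 < Pr p {ω | Y ω = y ∧ multisetOf (A ω) = multisetOf a}) :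
    Pr p {ω | (fun i => f (X ω i)) = yh ∧ A ω = a ∧ Y ω = y ∧
          multisetOf (A ω) = multisetOf a} /
        Pr p {ω | Y ω = y ∧ multisetOf (A ω) = multisetOf a}
      = (Pr p {ω | (fun i => f (X ω i)) = yh ∧ Y ω = y ∧
            multisetOf (A ω) = multisetOf a} /
          Pr p {ω | Y ω = y ∧ multisetOf (A ω) = multisetOf a})
        * (Pr p {ω | A ω = a ∧ Y ω = y ∧ multisetOf (A ω) = multisetOf a} /
          Pr p {ω | Y ω = y ∧ multisetOf (A ω) = multisetOf a}) :=
  stmt_5_general p X A Y Prm f q hPrm hdist yh a y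
end

section
/- Let Ω be a finite set and p, q probability mass functions on Ω with p(ω) + q(ω) > 0 for all ω ∈ Ω. Then the infimum over all functions D : Ω → (0,1) of the discriminator loss L(D) = Σ_ω p(ω)(−log D(ω)) + Σ_ω q(ω)(−log(1−D(ω))) equals log 4 − 2·JSD(p‖q), and it is attained by D*(ω) = p(ω)/(p(ω)+q(ω)) (with the convention that the value of D at points where p(ω) = 0 or q(ω) = 0 is interpreted as the corresponding limit, the infimum being taken over (0,1)-valued functions). -/
/-- Kullback–Leibler divergence between pmfs on a finite set (with `0 · log 0 = 0`,
using Mathlib's conventions `Real.log 0 = 0` and `x / 0 = 0`). -/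
noncomputable def KLdiv {Ω : Type*} [Fintype Ω] (p q : Ω → ℝ) : ℝ :=
  ∑ ω, p ω * Real.log (p ω / q ω)

/-- Jensen–Shannon divergence: `JSD(p‖q) = ½ KL(p‖m) + ½ KL(q‖m)` with `m = (p+q)/2`. -/
noncomputable def JSD {Ω : Type*} [Fintype Ω] (p q : Ω → ℝ) : ℝ :=
  KLdiv p (fun ω => (p ω + q ω) / 2) / 2 + KLdiv q (fun ω => (p ω + q ω) / 2) / 2

/-- The cross-entropy discriminator loss
`L(D) = ∑ ω p(ω)(−log D(ω)) + ∑ ω q(ω)(−log(1−D(ω)))`. -/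
noncomputable def discLoss {Ω : Type*} [Fintype Ω] (p q D : Ω → ℝ) : ℝ :=
  ∑ ω, p ω * (-Real.log (D ω)) + ∑ ω, q ω * (-Real.log (1 - D ω))

/-!
Pointwise, `t ↦ a log t + b log (1 - t)` is maximised on `(0,1)` at `t = a / (a + b)` (Gibbs'
inequality for two points, from `log x ≤ x - 1`), so `D*(ω) = p ω / (p ω + q ω)` minimises the
loss. With `m = (p + q) / 2` one has `KL(p‖m) = log 2 + ∑ p log (p / (p + q))`, which turns the
optimal loss into `log 4 - 2 JSD(p‖q)`. Where `p` or `q` vanishes, `D*` takes the value `0` or `1`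
and is not admissible; the infimum is then approached along `(1 - ε) D* + ε / 2` as `ε → 0⁺`.
-/

open Real Filter Topology Finset

lemma mul_log_le_mul_log_div_add {a s t : ℝ} (ha : 0 ≤ a) (hs : 0 < s) (ht : 0 < t) :
    a * log t ≤ a * log (a / s) + (s * t - a) := by
  rcases ha.eq_or_lt with rfl | ha
  · simp only [zero_mul, zero_add, sub_zero]
    positivity
  have hsplit : log t = log (a / s) + log (s * t / a) := by
    rw [← log_mul (by positivity) (by positivity)]
    congr 1
    field_simp
  calc a * log t = a * log (a / s) + a * log (s * t / a) := by rw [hsplit, mul_add]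
    _ ≤ a * log (a / s) + a * (s * t / a - 1) := by
        gcongr
        exact log_le_sub_one_of_pos (by positivity)
    _ = a * log (a / s) + (s * t - a) := by field_simp

lemma mul_log_add_mul_log_one_sub_le {a b t : ℝ} (ha : 0 ≤ a) (hb : 0 ≤ b) (hab : 0 < a + b)
    (ht : t ∈ Set.Ioo (0 : ℝ) 1) :
    a * log t + b * log (1 - t) ≤ a * log (a / (a + b)) + b * log (b / (a + b)) := by
  have h₁ := mul_log_le_mul_log_div_add ha hab ht.1
  have h₂ := mul_log_le_mul_log_div_add hb hab (sub_pos.2 ht.2)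
  linarith [show (a + b) * t - a + ((a + b) * (1 - t) - b) = 0 by ring]

lemma one_sub_div_add {a b : ℝ} (h : a + b ≠ 0) : 1 - a / (a + b) = b / (a + b) := by
  rw [one_sub_div h, add_sub_cancel_left]

lemma mul_log_div_half {a s : ℝ} (hs : s ≠ 0) :
    a * log (a / (s / 2)) = a * log 2 + a * log (a / s) := by
  rcases eq_or_ne a 0 with rfl | ha
  · simp
  rw [show a / (s / 2) = 2 * (a / s) by ring, log_mul two_ne_zero (div_ne_zero ha hs), mul_add]

lemma one_sub_mul_add_half_mem_Ioo {x ε : ℝ} (hx : x ∈ Set.Icc (0 : ℝ) 1)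
    (hε : ε ∈ Set.Ioo (0 : ℝ) 1) : (1 - ε) * x + ε / 2 ∈ Set.Ioo (0 : ℝ) 1 := by
  obtain ⟨hx₀, hx₁⟩ := hx
  obtain ⟨hε₀, hε₁⟩ := hε
  constructor <;> nlinarith

section Finite

variable {Ω : Type*} [Fintype Ω]

lemma KLdiv_half_eq {r s : Ω → ℝ} (hr : ∑ ω, r ω = 1) (hs : ∀ ω, s ω ≠ 0) :
    KLdiv r (fun ω => s ω / 2) = log 2 + ∑ ω, r ω * log (r ω / s ω) := by
  simp only [KLdiv, mul_log_div_half (hs _), sum_add_distrib, ← sum_mul, hr, one_mul]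

lemma discLoss_eq_neg_sum (p q D : Ω → ℝ) :
    discLoss p q D = -∑ ω, (p ω * log (D ω) + q ω * log (1 - D ω)) := by
  simp only [discLoss, mul_neg, sum_neg_distrib, sum_add_distrib]
  ring

lemma discLoss_optimal_le {p q D : Ω → ℝ} (hp : ∀ ω, 0 ≤ p ω) (hq : ∀ ω, 0 ≤ q ω)
    (hpq : ∀ ω, 0 < p ω + q ω) (hD : ∀ ω, D ω ∈ Set.Ioo (0 : ℝ) 1) :
    discLoss p q (fun ω => p ω / (p ω + q ω)) ≤ discLoss p q D := by
  simp only [discLoss_eq_neg_sum, one_sub_div_add (hpq _).ne', neg_le_neg_iff]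
  exact sum_le_sum fun ω _ => mul_log_add_mul_log_one_sub_le (hp ω) (hq ω) (hpq ω) (hD ω)

lemma discLoss_optimal_eq {p q : Ω → ℝ} (hp : ∑ ω, p ω = 1) (hq : ∑ ω, q ω = 1)
    (hpq : ∀ ω, p ω + q ω ≠ 0) :
    discLoss p q (fun ω => p ω / (p ω + q ω)) = log 4 - 2 * JSD p q := by
  have hlog4 : log 4 = 2 * log 2 := by
    rw [show (4 : ℝ) = 2 ^ 2 by norm_num, log_pow]
    norm_num
  rw [JSD, KLdiv_half_eq hp hpq, KLdiv_half_eq hq hpq, discLoss_eq_neg_sum, hlog4]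
  simp only [one_sub_div_add (hpq _), sum_add_distrib]
  ring

lemma tendsto_mul_log {α : Type*} {l : Filter α} {f : α → ℝ} {a x : ℝ}
    (hf : Tendsto f l (𝓝 x)) (h : a = 0 ∨ x ≠ 0) :
    Tendsto (fun e => a * log (f e)) l (𝓝 (a * log x)) := by
  rcases h with rfl | hx
  · simpa using tendsto_const_nhds
  · exact (hf.log hx).const_mul a

lemma tendsto_discLoss {α : Type*} {l : Filter α} {p q D₀ : Ω → ℝ} {D : α → Ω → ℝ}
    (hD : ∀ ω, Tendsto (fun e => D e ω) l (𝓝 (D₀ ω)))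
    (hp : ∀ ω, p ω = 0 ∨ D₀ ω ≠ 0) (hq : ∀ ω, q ω = 0 ∨ 1 - D₀ ω ≠ 0) :
    Tendsto (fun e => discLoss p q (D e)) l (𝓝 (discLoss p q D₀)) := by
  simp only [discLoss_eq_neg_sum]
  refine (tendsto_finsetSum _ fun ω _ => ?_).neg
  exact (tendsto_mul_log (hD ω) (hp ω)).add (tendsto_mul_log ((hD ω).const_sub 1) (hq ω))

lemma tendsto_discLoss_shrink_optimal {p q : Ω → ℝ} (hpq : ∀ ω, p ω + q ω ≠ 0) :
    Tendsto (fun ε : ℝ => discLoss p q (fun ω => (1 - ε) * (p ω / (p ω + q ω)) + ε / 2))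
      (𝓝 0) (𝓝 (discLoss p q (fun ω => p ω / (p ω + q ω)))) := by
  refine tendsto_discLoss (fun ω => ?_) (fun ω => ?_) (fun ω => ?_)
  · exact Continuous.tendsto' (by fun_prop) _ _ (by simp)
  · exact or_iff_not_imp_left.2 fun h => div_ne_zero h (hpq ω)
  · rw [one_sub_div_add (hpq ω)]
    exact or_iff_not_imp_left.2 fun h => div_ne_zero h (hpq ω)

end Finite

/-- for pmfs `p, q` on a finite set with `p + q > 0` pointwise, the infimum of
the discriminator loss over `(0,1)`-valued discriminators equals `log 4 − 2·JSD(p‖q)`, and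
it is attained by `D*(ω) = p(ω)/(p(ω)+q(ω))` (interpreted with the limit conventions
`Real.log 0 = 0`). -/
theorem stmt_11 {Ω : Type*} [Fintype Ω]
    (p q : Ω → ℝ) (hp0 : ∀ ω, 0 ≤ p ω) (hp1 : ∑ ω, p ω = 1)
    (hq0 : ∀ ω, 0 ≤ q ω) (hq1 : ∑ ω, q ω = 1)
    (hpq : ∀ ω, 0 < p ω + q ω) :
    sInf {v : ℝ | ∃ D : Ω → ℝ, (∀ ω, D ω ∈ Set.Ioo (0 : ℝ) 1) ∧ v = discLoss p q D}
        = Real.log 4 - 2 * JSD p q ∧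
    discLoss p q (fun ω => p ω / (p ω + q ω)) = Real.log 4 - 2 * JSD p q := by
  have hopt := discLoss_optimal_eq hp1 hq1 fun ω => (hpq ω).ne'
  refine ⟨?_, hopt⟩
  rw [← hopt]
  set S := {v : ℝ | ∃ D : Ω → ℝ, (∀ ω, D ω ∈ Set.Ioo (0 : ℝ) 1) ∧ v = discLoss p q D}
  have hlower : ∀ v ∈ S, discLoss p q (fun ω => p ω / (p ω + q ω)) ≤ v := by
    rintro _ ⟨D, hD, rfl⟩
    exact discLoss_optimal_le hp0 hq0 hpq hD
  have hDopt (ω : Ω) : p ω / (p ω + q ω) ∈ Set.Icc (0 : ℝ) 1 :=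
    ⟨div_nonneg (hp0 ω) (hpq ω).le, div_le_one_of_le₀ (le_add_of_nonneg_right (hq0 ω)) (hpq ω).le⟩
  have hS : S.Nonempty := ⟨_, fun _ => 1 / 2, fun _ => ⟨by norm_num, by norm_num⟩, rfl⟩
  refine le_antisymm ?_ (le_csInf hS hlower)
  refine ge_of_tendsto ((tendsto_discLoss_shrink_optimal fun ω => (hpq ω).ne').mono_left
    (nhdsWithin_le_nhds (s := Set.Ioi 0))) ?_
  filter_upwards [Ioo_mem_nhdsGT one_pos] with ε hε
  exact csInf_le ⟨_, hlower⟩ ⟨_, fun ω => one_sub_mul_add_half_mem_Ioo (hDopt ω) hε, rfl⟩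
end

section
/- Let 𝒳, 𝒴 be finite sets, let (X,Y) have joint probability mass function p on 𝒳 × 𝒴, let r(·|·) be a conditional probability mass function on 𝒴 given 𝒳 with r(y|x) > 0 whenever p(x,y) > 0, let Ω be a finite set, let P1 and P2 be probability mass functions on Ω, and let μ ∈ [0,1]. Define the cross-entropy loss L_f(r) = Σ_{x,y} p(x,y)(−log r(y|x)). Then: sup over D : Ω → (0,1) of [(1−μ)·L_f(r) − μ·(Σ_ω P1(ω)(−log D(ω)) + Σ_ω P2(ω)(−log(1−D(ω))))] = (1−μ)·L_f(r) + 2μ·JSD(P1‖P2) − μ·log 4 ≥ (1−μ)·H(Y|X) − μ·log 4. -/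
/-- The expected negative log-likelihood loss `L_f(r) = ∑_{x,y} p(x,y)(−log r(y|x))`. -/
noncomputable def nllLoss {𝒳 𝒴 : Type*} [Fintype 𝒳] [Fintype 𝒴] (p r : 𝒳 → 𝒴 → ℝ) : ℝ :=
  ∑ x, ∑ y, p x y * (-Real.log (r x y))

/-- The conditional entropy `H(Y|X) = ∑_{x,y} p(x,y)(−log p(y|x))`. -/
noncomputable def condEnt {𝒳 𝒴 : Type*} [Fintype 𝒳] [Fintype 𝒴] (p : 𝒳 → 𝒴 → ℝ) : ℝ :=
  ∑ x, ∑ y, p x y * (-Real.log (p x y / ∑ y', p x y'))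

/-!
By Gibbs' inequality the discriminator loss `p (-log D) + q (-log (1 - D))` is minimised pointwise
by the Bayes discriminator `D = p / (p + q)`, where the total loss is `log 4 - 2 JSD(p‖q)`. That
minimiser may take the values `0` and `1`, so the infimum over `D ∈ (0, 1)` is only approached,
by smoothing it. The lower bound combines `JSD ≥ 0` with `H(Y|X) ≤ L_f(r)`, which is again Gibbs'
inequality, for `r(·|x)` against `p(·|x)`.
-/

open Real Finset Filter Topology

lemma sub_le_mul_log_div {a c : ℝ} (ha : 0 ≤ a) (hc : 0 ≤ c) (hac : 0 < a → 0 < c) :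
    a - c ≤ a * log (a / c) := by
  rcases ha.eq_or_lt with rfl | ha
  · simpa using hc
  · have hc := hac ha
    have h := mul_le_mul_of_nonneg_left (one_sub_inv_le_log_of_pos (div_pos ha hc)) ha.le
    rwa [inv_div, mul_sub, mul_one, mul_div_cancel₀ _ ha.ne'] at h

lemma mul_neg_log_div_le {a s t : ℝ} (ha : 0 ≤ a) (has : a ≤ s) (ht : 0 ≤ t)
    (hat : 0 < a → 0 < t) : a * -log (a / s) ≤ a * -log t + (s * t - a) := by
  have hs : 0 ≤ s := ha.trans has
  rcases ha.eq_or_lt with rfl | ha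
  · simpa using mul_nonneg hs ht
  · have ht := hat ha
    have hgibbs := sub_le_mul_log_div ha.le (mul_nonneg hs ht.le)
      fun _ => mul_pos (ha.trans_le has) ht
    rw [← div_div, log_div (div_pos ha (ha.trans_le has)).ne' ht.ne'] at hgibbs
    linarith

lemma mul_neg_log_add_div_add_le {a s ε : ℝ} (ha : 0 ≤ a) (has : a ≤ s) (hε : 0 < ε) :
    a * -log ((a + ε) / (s + 2 * ε)) ≤ a * -log (a / s) + 2 * ε := by
  rcases ha.eq_or_lt with rfl | ha
  · simpa using hε.le
  · have hs := ha.trans_le has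
    set x := a / s / ((a + ε) / (s + 2 * ε)) with hx
    have hx0 : 0 < x := by positivity
    have hlog : a * -log ((a + ε) / (s + 2 * ε)) = a * -log (a / s) + a * log x := by
      rw [hx, log_div (x := a / s) (by positivity) (by positivity)]; ring
    have hlin : a * (x - 1) ≤ 2 * ε := by
      have hx1 : a * (x - 1) = a * ε * (2 * a - s) / (s * (a + ε)) := by
        rw [hx]; field_simp; ring
      rw [hx1, div_le_iff₀ (by positivity)]
      nlinarith [mul_le_mul_of_nonneg_left has (mul_nonneg ha.le hε.le), mul_pos (mul_pos ha hs) hε,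
        mul_pos (mul_pos hε hε) hs]
    nlinarith [mul_le_mul_of_nonneg_left (log_le_sub_one_of_pos hx0) ha.le]

section Discriminator

variable {Ω : Type*} {p q : Ω → ℝ}

noncomputable def smoothBayesDisc (p q : Ω → ℝ) (ε : ℝ) (ω : Ω) : ℝ :=
  (p ω + ε) / (p ω + q ω + 2 * ε)

lemma smoothBayesDisc_mem_Ioo (hp : ∀ ω, 0 ≤ p ω) (hq : ∀ ω, 0 ≤ q ω) {ε : ℝ} (hε : 0 < ε)
    (ω : Ω) : smoothBayesDisc p q ε ω ∈ Set.Ioo 0 1 := by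
  have := hp ω; have := hq ω
  exact ⟨by unfold smoothBayesDisc; positivity,
    (div_lt_one (by positivity)).2 (by linarith)⟩

lemma one_sub_smoothBayesDisc (hp : ∀ ω, 0 ≤ p ω) (hq : ∀ ω, 0 ≤ q ω) {ε : ℝ} (hε : 0 < ε)
    (ω : Ω) : 1 - smoothBayesDisc p q ε ω = (q ω + ε) / (p ω + q ω + 2 * ε) := by
  have := hp ω; have := hq ω
  unfold smoothBayesDisc
  field_simp
  ring

variable [Fintype Ω]

/-- The discriminator loss of the Bayes-optimal discriminator `D = p / (p + q)`. -/
noncomputable def bayesDiscLoss (p q : Ω → ℝ) : ℝ :=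
  ∑ ω, (p ω * -log (p ω / (p ω + q ω)) + q ω * -log (q ω / (p ω + q ω)))

lemma discLoss_eq_sum (p q D : Ω → ℝ) :
    discLoss p q D = ∑ ω, (p ω * -log (D ω) + q ω * -log (1 - D ω)) :=
  sum_add_distrib.symm

lemma bayesDiscLoss_le_discLoss (hp : ∀ ω, 0 ≤ p ω) (hq : ∀ ω, 0 ≤ q ω) {D : Ω → ℝ}
    (hD : ∀ ω, D ω ∈ Set.Ioo 0 1) : bayesDiscLoss p q ≤ discLoss p q D := by
  rw [discLoss_eq_sum]
  refine sum_le_sum fun ω _ => ?_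
  obtain ⟨hD0, hD1⟩ := hD ω
  have hp' := mul_neg_log_div_le (hp ω) (le_add_of_nonneg_right (hq ω)) hD0.le fun _ => hD0
  have hq' := mul_neg_log_div_le (hq ω) (le_add_of_nonneg_left (hp ω)) (sub_pos.2 hD1).le
    fun _ => sub_pos.2 hD1
  linarith

lemma discLoss_smoothBayesDisc_le (hp : ∀ ω, 0 ≤ p ω) (hq : ∀ ω, 0 ≤ q ω) {ε : ℝ} (hε : 0 < ε) :
    discLoss p q (smoothBayesDisc p q ε) ≤ bayesDiscLoss p q + Fintype.card Ω * (4 * ε) := by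
  rw [discLoss_eq_sum, bayesDiscLoss, ← nsmul_eq_mul, ← card_univ, ← sum_const,
    ← sum_add_distrib]
  refine sum_le_sum fun ω _ => ?_
  rw [one_sub_smoothBayesDisc hp hq hε]
  have hp' := mul_neg_log_add_div_add_le (hp ω) (le_add_of_nonneg_right (hq ω)) hε
  have hq' := mul_neg_log_add_div_add_le (hq ω) (le_add_of_nonneg_left (hp ω)) hε
  exact (add_le_add hp' hq').trans_eq (by ring)

lemma isGLB_discLoss (hp : ∀ ω, 0 ≤ p ω) (hq : ∀ ω, 0 ≤ q ω) :
    IsGLB (discLoss p q '' {D | ∀ ω, D ω ∈ Set.Ioo 0 1}) (bayesDiscLoss p q) := by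
  refine ⟨?_, fun b hb => ?_⟩
  · rintro _ ⟨D, hD, rfl⟩
    exact bayesDiscLoss_le_discLoss hp hq hD
  · have hlim : Tendsto (fun ε => bayesDiscLoss p q + Fintype.card Ω * (4 * ε)) (𝓝[>] 0)
        (𝓝 (bayesDiscLoss p q)) :=
      tendsto_nhdsWithin_of_tendsto_nhds (Continuous.tendsto' (by fun_prop) _ _ (by simp))
    refine ge_of_tendsto hlim (eventually_nhdsWithin_of_forall fun ε hε => ?_)
    exact (hb ⟨_, smoothBayesDisc_mem_Ioo hp hq hε, rfl⟩).trans
      (discLoss_smoothBayesDisc_le hp hq hε)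

end Discriminator

section JensenShannon

variable {Ω : Type*} [Fintype Ω] {p q : Ω → ℝ}

lemma KLdiv_mid_eq (hp : ∀ ω, 0 ≤ p ω) (hq : ∀ ω, 0 ≤ q ω) (hp1 : ∑ ω, p ω = 1) :
    KLdiv p (fun ω => (p ω + q ω) / 2) = log 2 - ∑ ω, p ω * -log (p ω / (p ω + q ω)) := by
  have hterm : ∀ ω, p ω * log (p ω / ((p ω + q ω) / 2))
      = p ω * log 2 - p ω * -log (p ω / (p ω + q ω)) := by
    intro ω
    rcases (hp ω).eq_or_lt with h0 | h0
    · simp [← h0]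
    · have hs : 0 < p ω + q ω := add_pos_of_pos_of_nonneg h0 (hq ω)
      rw [div_div_eq_mul_div, mul_comm (p ω) 2, mul_div_assoc,
        log_mul two_ne_zero (div_pos h0 hs).ne']
      ring
  simp only [KLdiv, hterm, sum_sub_distrib, ← sum_mul, hp1, one_mul]

lemma bayesDiscLoss_eq_log_four_sub_JSD (hp : ∀ ω, 0 ≤ p ω) (hp1 : ∑ ω, p ω = 1)
    (hq : ∀ ω, 0 ≤ q ω) (hq1 : ∑ ω, q ω = 1) :
    bayesDiscLoss p q = log 4 - 2 * JSD p q := by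
  have hqp := KLdiv_mid_eq hq hp hq1
  simp only [add_comm (q _) (p _)] at hqp
  rw [JSD, KLdiv_mid_eq hp hq hp1, hqp, bayesDiscLoss, sum_add_distrib,
    show (4 : ℝ) = 2 ^ 2 by norm_num, log_pow]
  ring

lemma discLoss_half (hp1 : ∑ ω, p ω = 1) (hq1 : ∑ ω, q ω = 1) :
    discLoss p q (fun _ => 1 / 2) = log 4 := by
  rw [discLoss, ← sum_mul, ← sum_mul, hp1, hq1, show (1 : ℝ) - 1 / 2 = 1 / 2 by norm_num,
    show (4 : ℝ) = (1 / 2)⁻¹ ^ 2 by norm_num, log_pow, log_inv]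
  ring

lemma JSD_nonneg (hp : ∀ ω, 0 ≤ p ω) (hp1 : ∑ ω, p ω = 1)
    (hq : ∀ ω, 0 ≤ q ω) (hq1 : ∑ ω, q ω = 1) : 0 ≤ JSD p q := by
  have h := bayesDiscLoss_le_discLoss hp hq (D := fun _ => 1 / 2) fun _ => by norm_num
  rw [bayesDiscLoss_eq_log_four_sub_JSD hp hp1 hq hq1, discLoss_half hp1 hq1] at h
  linarith

end JensenShannon

lemma condEnt_le_nllLoss {𝒳 𝒴 : Type*} [Fintype 𝒳] [Fintype 𝒴] {p r : 𝒳 → 𝒴 → ℝ}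
    (hp : ∀ x y, 0 ≤ p x y) (hr : ∀ x y, 0 ≤ r x y) (hr1 : ∀ x, ∑ y, r x y = 1)
    (hpr : ∀ x y, 0 < p x y → 0 < r x y) : condEnt p ≤ nllLoss p r := by
  refine sum_le_sum fun x _ => ?_
  have hbound := sum_le_sum fun y (_ : y ∈ univ) => mul_neg_log_div_le (hp x y)
    (single_le_sum (fun y' _ => hp x y') (mem_univ y)) (hr x y) (hpr x y)
  rwa [sum_add_distrib, sum_sub_distrib, ← mul_sum, hr1, mul_one, sub_self, add_zero] at hbound

lemma csSup_sub_mul_eq_of_isGLB {α : Type*} {f : α → ℝ} {P : α → Prop} {a : ℝ}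
    (hf : IsGLB (f '' {x | P x}) a) (hP : ∃ x, P x) (c : ℝ) {μ : ℝ} (hμ : 0 ≤ μ) :
    sSup {v | ∃ x, P x ∧ v = c - μ * f x} = c - μ * a := by
  have hset : {v | ∃ x, P x ∧ v = c - μ * f x} = (fun t => c - μ * t) '' (f '' {x | P x}) := by
    ext v
    simp only [Set.mem_ofPred_eq, Set.image_image, Set.mem_image, eq_comm]
  have hanti : Antitone fun t : ℝ => c - μ * t := fun _ _ h =>
    sub_le_sub_left (mul_le_mul_of_nonneg_left h hμ) c
  obtain ⟨x, hx⟩ := hP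
  have hne : (f '' {x | P x}).Nonempty := ⟨f x, x, hx, rfl⟩
  rw [hset]
  exact (hf.isLUB_of_tendsto (hanti.antitoneOn _) hne
    ((Continuous.tendsto (by fun_prop) a).mono_left nhdsWithin_le_nhds)).csSup_eq (hne.image _)

theorem stmt_13_general {𝒳 𝒴 Ω : Type*} [Fintype 𝒳] [Fintype 𝒴] [Fintype Ω]
    (p : 𝒳 → 𝒴 → ℝ) (hp0 : ∀ x y, 0 ≤ p x y)
    (r : 𝒳 → 𝒴 → ℝ) (hr0 : ∀ x y, 0 ≤ r x y) (hr1 : ∀ x, ∑ y, r x y = 1)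
    (hrpos : ∀ x y, 0 < p x y → 0 < r x y)
    (P1 P2 : Ω → ℝ) (hP10 : ∀ ω, 0 ≤ P1 ω) (hP11 : ∑ ω, P1 ω = 1)
    (hP20 : ∀ ω, 0 ≤ P2 ω) (hP21 : ∑ ω, P2 ω = 1)
    (μ : ℝ) (hμ : μ ∈ Set.Icc (0 : ℝ) 1) :
    sSup {v : ℝ | ∃ D : Ω → ℝ, (∀ ω, D ω ∈ Set.Ioo (0 : ℝ) 1) ∧
          v = (1 - μ) * nllLoss p r - μ * discLoss P1 P2 D}
        = (1 - μ) * nllLoss p r + 2 * μ * JSD P1 P2 - μ * Real.log 4 ∧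
    (1 - μ) * condEnt p - μ * Real.log 4
      ≤ (1 - μ) * nllLoss p r + 2 * μ * JSD P1 P2 - μ * Real.log 4 := by
  obtain ⟨hμ0, hμ1⟩ := hμ
  have hglb := isGLB_discLoss hP10 hP20
  rw [bayesDiscLoss_eq_log_four_sub_JSD hP10 hP11 hP20 hP21] at hglb
  constructor
  · rw [csSup_sub_mul_eq_of_isGLB hglb ⟨fun _ => 1 / 2, fun _ => by norm_num⟩ _ hμ0]
    ring
  · have hH := mul_le_mul_of_nonneg_left (condEnt_le_nllLoss hp0 hr0 hr1 hrpos)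
      (sub_nonneg.2 hμ1)
    have hJSD := mul_nonneg hμ0 (JSD_nonneg hP10 hP11 hP20 hP21)
    linarith

/-- the single-parameter form of the adversarial value function:
`sup_D [(1−μ)L_f(r) − μ·L_d(D)] = (1−μ)L_f(r) + 2μ·JSD(P1‖P2) − μ·log 4`
`≥ (1−μ)·H(Y|X) − μ·log 4`. -/
theorem stmt_13 {𝒳 𝒴 Ω : Type*} [Fintype 𝒳] [Fintype 𝒴] [Fintype Ω]
    (p : 𝒳 → 𝒴 → ℝ) (hp0 : ∀ x y, 0 ≤ p x y) (hp1 : ∑ x, ∑ y, p x y = 1)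
    (r : 𝒳 → 𝒴 → ℝ) (hr0 : ∀ x y, 0 ≤ r x y) (hr1 : ∀ x, ∑ y, r x y = 1)
    (hrpos : ∀ x y, 0 < p x y → 0 < r x y)
    (P1 P2 : Ω → ℝ) (hP10 : ∀ ω, 0 ≤ P1 ω) (hP11 : ∑ ω, P1 ω = 1)
    (hP20 : ∀ ω, 0 ≤ P2 ω) (hP21 : ∑ ω, P2 ω = 1)
    (μ : ℝ) (hμ : μ ∈ Set.Icc (0 : ℝ) 1) :
    sSup {v : ℝ | ∃ D : Ω → ℝ, (∀ ω, D ω ∈ Set.Ioo (0 : ℝ) 1) ∧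
          v = (1 - μ) * nllLoss p r - μ * discLoss P1 P2 D}
        = (1 - μ) * nllLoss p r + 2 * μ * JSD P1 P2 - μ * Real.log 4 ∧
    (1 - μ) * condEnt p - μ * Real.log 4
      ≤ (1 - μ) * nllLoss p r + 2 * μ * JSD P1 P2 - μ * Real.log 4 :=
  stmt_13_general p hp0 r hr0 hr1 hrpos P1 P2 hP10 hP11 hP20 hP21 μ hμ
end

section
/- Let 𝒳, 𝒜, 𝒴, 𝒴' be finite sets and (X_1,A_1,Y_1),…,(X_n,A_n,Y_n) i.i.d. from a joint probability mass function on 𝒳 × 𝒜 × 𝒴 whose (A,Y)-marginal is strictly positive; let q(y|a) = P(Y_1=y|A_1=a), f : 𝒳 → 𝒴' a fixed function, and Ŷ_i = f(X_i). For k = 1,…,K, let Π_k be random permutations that are conditionally i.i.d. given (A, Y) (and independent of X given (A,Y)) with conditional distribution the ICP distribution with density q, and set Ã^{(k)} = A_{Π_k}. Let T : (𝒴')ⁿ × 𝒜ⁿ × 𝒴ⁿ → ℝ be any function, and define p_v = (1 + Σ_{k=1}^K 1[T(Ŷ, A, Y) ≥ T(Ŷ, Ã^{(k)}, Y)]) /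 (K+1). If f(X_1) is conditionally independent of A_1 given Y_1 (the equalized odds null hypothesis), then for every α ∈ [0,1], P(p_v ≤ α) ≤ α. -/
open Finset

section RankPValue

variable {ι : Type*} [Fintype ι] [DecidableEq ι]

noncomputable def rankPValue (t : ι → ℝ) (i : ι) : ℝ :=
  (1 + #{l | l ≠ i ∧ t l ≤ t i}) / Fintype.card ι

theorem rankPValue_comp_equiv (t : ι → ℝ) (σ : Equiv.Perm ι) (i : ι) :
    rankPValue (t ∘ σ) i = rankPValue t (σ i) := by
  unfold rankPValue
  congr 3
  exact card_equiv σ fun l => by simp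

theorem rankPValue_cons_zero {K : ℕ} (t₀ : ℝ) (s : Fin K → ℝ) :
    rankPValue (Fin.cons t₀ s : Fin (K + 1) → ℝ) 0 = (1 + #{k | s k ≤ t₀}) / (K + 1) := by
  have hcount : #{l : Fin (K + 1) | l ≠ 0 ∧ (Fin.cons t₀ s : Fin (K + 1) → ℝ) l ≤ t₀}
      = #{k | s k ≤ t₀} := by
    rw [card_filter, card_filter, Fin.sum_univ_succ]
    simp
  simp only [rankPValue, Fin.cons_zero, hcount, Fintype.card_fin]
  push_cast
  rfl

/-- Among any real scores, at most an `α`-fraction of the coordinates has rank p-value `≤ α`: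
all of them lie below the largest score among them. -/
theorem card_rankPValue_le (t : ι → ℝ) {α : ℝ} (hα : 0 ≤ α) :
    (#{i | rankPValue t i ≤ α} : ℝ) ≤ α * Fintype.card ι := by
  set S := ({i | rankPValue t i ≤ α} : Finset ι)
  rcases S.eq_empty_or_nonempty with hS | hS
  · rw [hS, card_empty, Nat.cast_zero]
    positivity
  obtain ⟨i, hiS, hmax⟩ := S.exists_max_image t hS
  have hcard : (0 : ℝ) < Fintype.card ι := by
    exact_mod_cast Fintype.card_pos_iff.mpr ⟨i⟩
  have hle : S.card ≤ 1 + #{l | l ≠ i ∧ t l ≤ t i} := by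
    have : S.erase i ⊆ ({l | l ≠ i ∧ t l ≤ t i} : Finset ι) := fun l hl => by
      rw [mem_erase] at hl
      simpa using ⟨hl.1, hmax l hl.2⟩
    have := card_le_card this
    rw [card_erase_of_mem hiS] at this
    omega
  have hi : rankPValue t i ≤ α := (mem_filter.mp hiS).2
  rw [rankPValue, div_le_iff₀ hcard] at hi
  calc (S.card : ℝ) ≤ 1 + #{l | l ≠ i ∧ t l ≤ t i} := by exact_mod_cast hle
    _ ≤ α * Fintype.card ι := hi

/-- Validity of the rank p-value for exchangeable scores: if the weighted law of the score
vector `t v` is invariant under swapping coordinate `i₀` with any other coordinate, then the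
rank p-value of coordinate `i₀` is super-uniform. -/
theorem sum_rankPValue_le {V : Type*} [Fintype V] (W : V → ℝ) (hW : ∀ v, 0 ≤ W v)
    (t : V → ι → ℝ) (i₀ : ι)
    (hexch : ∀ i, ∃ Φ : V ≃ V, (∀ v, W (Φ v) = W v) ∧ ∀ v, t (Φ v) = t v ∘ Equiv.swap i₀ i)
    {α : ℝ} (hα : 0 ≤ α) :
    ∑ v, (if rankPValue (t v) i₀ ≤ α then W v else 0) ≤ α * ∑ v, W v := by
  have hswap : ∀ i, ∑ v, (if rankPValue (t v) i₀ ≤ α then W v else 0)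
      = ∑ v, (if rankPValue (t v) i ≤ α then W v else 0) := fun i => by
    obtain ⟨Φ, hΦW, hΦt⟩ := hexch i
    rw [← Φ.sum_comp]
    simp only [hΦW, hΦt, rankPValue_comp_equiv, Equiv.swap_apply_left]
  have hcard : (0 : ℝ) < Fintype.card ι := by
    exact_mod_cast Fintype.card_pos_iff.mpr ⟨i₀⟩
  refine le_of_mul_le_mul_left ?_ hcard
  calc (Fintype.card ι : ℝ) * ∑ v, (if rankPValue (t v) i₀ ≤ α then W v else 0)
      = ∑ i, ∑ v, (if rankPValue (t v) i ≤ α then W v else 0) := by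
        simp [← hswap, Finset.card_univ]
    _ = ∑ v, (#{i | rankPValue (t v) i ≤ α} : ℝ) * W v := by
        rw [sum_comm]
        simp [← sum_filter]
    _ ≤ ∑ v, α * Fintype.card ι * W v :=
        sum_le_sum fun v _ => mul_le_mul_of_nonneg_right (card_rankPValue_le _ hα) (hW v)
    _ = Fintype.card ι * (α * ∑ v, W v) := by
        rw [mul_sum, mul_sum]; exact sum_congr rfl fun v _ => by ring

end RankPValue

section ICPSwap

open Equiv

variable {𝒜 𝒴 : Type*} {n K : ℕ}

def permutedCopies (a : Fin n → 𝒜) (πs : Fin K → Perm (Fin n)) : Fin (K + 1) → Fin n → 𝒜 :=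
  Fin.cons a fun k i => a (πs k i)

def swapCopy (k : Fin K) : Perm ((Fin n → 𝒜) × (Fin K → Perm (Fin n))) :=
  Function.Involutive.toPerm
    (fun v => (fun i => v.1 (v.2 k i), fun l => if l = k then (v.2 k)⁻¹ else (v.2 k)⁻¹ * v.2 l))
    (by
      rintro ⟨a, πs⟩
      refine Prod.ext (funext fun i => by simp) (funext fun l => ?_)
      by_cases hl : l = k <;> simp [hl, ← mul_assoc])

@[simp]
theorem swapCopy_apply (k : Fin K) (a : Fin n → 𝒜) (πs : Fin K → Perm (Fin n)) :
    swapCopy k (a, πs)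
      = (fun i => a (πs k i), fun l => if l = k then (πs k)⁻¹ else (πs k)⁻¹ * πs l) :=
  rfl

theorem permutedCopies_swapCopy (k : Fin K) (v : (Fin n → 𝒜) × (Fin K → Perm (Fin n))) :
    permutedCopies (swapCopy k v).1 (swapCopy k v).2
      = permutedCopies v.1 v.2 ∘ swap 0 k.succ := by
  obtain ⟨a, πs⟩ := v
  funext l
  induction l using Fin.cases with
  | zero => simp [permutedCopies]
  | succ l =>
    by_cases hl : l = k
    · subst hl; simp [permutedCopies]
    · rw [Function.comp_apply, swap_apply_of_ne_of_ne (Fin.succ_ne_zero l)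
        (fun h => hl (Fin.succ_injective _ h))]
      simp [permutedCopies, hl, Perm.mul_apply]

theorem ICPweight_eq_div {q : 𝒴 → 𝒜 → ℝ} (m : 𝒜 → 𝒴 → ℝ) (g : 𝒜 → ℝ) (hg : ∀ b, g b ≠ 0)
    (hq : ∀ y b, q y b = m b y * g b) (a : Fin n → 𝒜) (y : Fin n → 𝒴) (π : Perm (Fin n)) :
    ICPweight q a y π = (∏ i, m (a (π i)) (y i)) / ∑ σ : Perm (Fin n), ∏ i, m (a (σ i)) (y i) := by
  have hprod : ∀ σ : Perm (Fin n),
      ∏ i, q (y (σ⁻¹ i)) (a i) = (∏ i, m (a (σ i)) (y i)) * ∏ i, g (a i) := fun σ => by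
    rw [← Equiv.prod_comp σ (fun i => q (y (σ⁻¹ i)) (a i))]
    simp [hq, prod_mul_distrib, Equiv.prod_comp σ (fun i => g (a i))]
  simp only [ICPweight, hprod, ← Finset.sum_mul]
  exact mul_div_mul_right _ _ (Finset.prod_ne_zero_iff.mpr fun i _ => hg (a i))

/-- When `m b y = P(A = b, Y = y)`: up to a factor depending only on `y`, the conditional
probability of `(A, Π₁, …, Π_K) = (a, πs)` given `Y = y`. -/
noncomputable def icpJointWeight (q : 𝒴 → 𝒜 → ℝ) (m : 𝒜 → 𝒴 → ℝ) (y : Fin n → 𝒴)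
    (v : (Fin n → 𝒜) × (Fin K → Perm (Fin n))) : ℝ :=
  (∏ k, ICPweight q v.1 y (v.2 k)) * ∏ i, m (v.1 i) (y i)

theorem icpJointWeight_swapCopy {q : 𝒴 → 𝒜 → ℝ} (m : 𝒜 → 𝒴 → ℝ) (g : 𝒜 → ℝ)
    (hg : ∀ b, g b ≠ 0) (hq : ∀ y b, q y b = m b y * g b) (y : Fin n → 𝒴) (k : Fin K)
    (v : (Fin n → 𝒜) × (Fin K → Perm (Fin n))) :
    icpJointWeight q m y (swapCopy k v) = icpJointWeight q m y v := by
  set M : (Fin n → 𝒜) → ℝ := fun a => ∏ i, m (a i) (y i)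
  set Z : (Fin n → 𝒜) → ℝ := fun a => ∑ σ : Perm (Fin n), M fun i => a (σ i)
  have hZ : ∀ (a : Fin n → 𝒜) (π : Perm (Fin n)), Z (fun i => a (π i)) = Z a := fun a π =>
    Fintype.sum_equiv (Equiv.mulLeft π) _ _ fun σ => by simp [M, Perm.mul_apply]
  have hweight : ∀ w : (Fin n → 𝒜) × (Fin K → Perm (Fin n)),
      icpJointWeight q m y w = (∏ l, M (permutedCopies w.1 w.2 l)) / Z w.1 ^ K := fun w => by
    simp only [icpJointWeight, ICPweight_eq_div m g hg hq, Fin.prod_univ_succ, permutedCopies,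
      Fin.cons_zero, Fin.cons_succ, prod_div_distrib, prod_const, card_univ, Fintype.card_fin]
    ring
  rw [hweight, hweight, permutedCopies_swapCopy]
  simp only [Function.comp_apply]
  rw [Equiv.prod_comp (swap 0 k.succ) (fun l => M (permutedCopies v.1 v.2 l))]
  exact congrArg _ (congrArg (· ^ K) (hZ v.1 (v.2 k)))

theorem rankPValue_comp_permutedCopies (S : (Fin n → 𝒜) → ℝ) (a : Fin n → 𝒜)
    (πs : Fin K → Perm (Fin n)) :
    rankPValue (S ∘ permutedCopies a πs) 0
      = (1 + #{k | S (fun i => a (πs k i)) ≤ S a}) / (K + 1) := by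
  rw [permutedCopies, Fin.comp_cons, rankPValue_cons_zero]
  rfl

theorem exists_equiv_swap_permutedCopies {β : Type*} {q : 𝒴 → 𝒜 → ℝ} (m : 𝒜 → 𝒴 → ℝ)
    (g : 𝒜 → ℝ) (hg : ∀ b, g b ≠ 0) (hq : ∀ y b, q y b = m b y * g b) (y : β → Fin n → 𝒴)
    (w₀ : β → ℝ) (W : ((Fin n → 𝒜) × (Fin K → Perm (Fin n))) × β → ℝ)
    (hW : ∀ v, W v = w₀ v.2 * icpJointWeight q m (y v.2) v.1) (S : β → (Fin n → 𝒜) → ℝ)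
    (l : Fin (K + 1)) :
    ∃ Φ : _ ≃ _, (∀ v, W (Φ v) = W v) ∧ ∀ v,
      S (Φ v).2 ∘ permutedCopies (Φ v).1.1 (Φ v).1.2
        = (S v.2 ∘ permutedCopies v.1.1 v.1.2) ∘ swap 0 l := by
  induction l using Fin.cases with
  | zero => exact ⟨Equiv.refl _, fun _ => rfl, fun v => by simp⟩
  | succ k =>
    refine ⟨(swapCopy k).prodCongr (Equiv.refl β), fun v => ?_, fun v => ?_⟩
    · simp only [hW, prodCongr_apply, Prod.map, refl_apply, icpJointWeight_swapCopy m g hg hq]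
    · simp only [prodCongr_apply, Prod.map, refl_apply, permutedCopies_swapCopy]
      rfl

end ICPSwap

section Pr

variable {Ω β : Type*} [Fintype Ω] [Fintype β] (p : Ω → ℝ)

theorem Pr_nonneg (hp : ∀ ω, 0 ≤ p ω) (E : Set Ω) : 0 ≤ Pr p E :=
  sum_nonneg fun ω _ => Set.indicator_nonneg (fun ω _ => hp ω) ω

theorem Pr_setOf_comp (V : Ω → β) (P : β → Prop) [DecidablePred P] :
    Pr p {ω | P (V ω)} = ∑ v, if P v then Pr p {ω | V ω = v} else 0 := by
  classical
  simp only [Pr, Set.indicator_apply, Set.mem_ofPred_eq]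
  rw [← sum_fiberwise univ V]
  refine sum_congr rfl fun v _ => ?_
  rw [sum_filter]
  split_ifs with h
  · exact sum_congr rfl fun ω _ => by split_ifs <;> simp_all
  · exact sum_eq_zero fun ω _ => by split_ifs <;> simp_all

theorem sum_Pr_fiber (V : Ω → β) : ∑ v, Pr p {ω | V ω = v} = ∑ ω, p ω := by
  classical
  simpa [Pr] using (Pr_setOf_comp p V fun _ => True).symm

end Pr

theorem exists_Pr_eq_mul_icpJointWeight {Ω 𝒳 𝒜 𝒴 𝒴' : Type*} [Fintype Ω] [Fintype 𝒳]
    [Fintype 𝒜] [Fintype 𝒴] [DecidableEq 𝒴'] {n K : ℕ} (p : Ω → ℝ) (X : Ω → Fin n → 𝒳)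
    (A : Ω → Fin n → 𝒜) (Y : Ω → Fin n → 𝒴) (Prm : Ω → Fin K → Equiv.Perm (Fin n)) (f : 𝒳 → 𝒴')
    (q : 𝒴 → 𝒜 → ℝ) (j : 𝒳 → 𝒜 → 𝒴 → ℝ)
    (hiid : ∀ (x : Fin n → 𝒳) (a : Fin n → 𝒜) (y : Fin n → 𝒴),
      Pr p {ω | X ω = x ∧ A ω = a ∧ Y ω = y} = ∏ i, j (x i) (a i) (y i))
    (hPrm : ∀ (x : Fin n → 𝒳) (a : Fin n → 𝒜) (y : Fin n → 𝒴)
        (πs : Fin K → Equiv.Perm (Fin n)),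
      Pr p {ω | Prm ω = πs ∧ X ω = x ∧ A ω = a ∧ Y ω = y}
        = (∏ k, ICPweight q a y (πs k)) * Pr p {ω | X ω = x ∧ A ω = a ∧ Y ω = y})
    (hEO : ∀ (b : 𝒴') (a0 : 𝒜) (y0 : 𝒴),
      (∑ x, if f x = b then j x a0 y0 else 0) * (∑ x, ∑ a', j x a' y0)
        = (∑ x, ∑ a', if f x = b then j x a' y0 else 0) * (∑ x, j x a0 y0))
    (hmarg : ∀ b y0, 0 < ∑ x, j x b y0) :
    ∃ ρ : 𝒴' → 𝒴 → ℝ, ∀ a πs yh y,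
      Pr p {ω | ((A ω, Prm ω), (fun i => f (X ω i), Y ω)) = ((a, πs), (yh, y))}
        = (∏ i, ρ (yh i) (y i)) * icpJointWeight q (fun b y0 => ∑ x, j x b y0) y (a, πs) := by
  -- `ρ b y₀ = P(Ŷ₁ = b | Y₁ = y₀)`; the null hypothesis `hEO` says
  -- `P(Ŷ₁ = b, A₁ = a, Y₁ = y₀) = ρ b y₀ · P(A₁ = a, Y₁ = y₀)`.
  refine ⟨fun b y0 => (∑ x, ∑ a', if f x = b then j x a' y0 else 0) / ∑ x, ∑ a', j x a' y0,
    fun a πs yh y => ?_⟩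
  have hfactor : ∀ b a0 y0, (∑ x, if f x = b then j x a0 y0 else 0)
      = (∑ x, ∑ a', if f x = b then j x a' y0 else 0) / (∑ x, ∑ a', j x a' y0)
        * ∑ x, j x a0 y0 := fun b a0 y0 => by
    have hs : (∑ x, ∑ a', j x a' y0) ≠ 0 := by
      rw [sum_comm]
      exact (sum_pos (fun a' _ => hmarg a' y0) ⟨a0, mem_univ _⟩).ne'
    rw [div_mul_eq_mul_div, eq_div_iff hs]
    exact hEO b a0 y0
  rw [icpJointWeight, mul_left_comm, ← prod_mul_distrib]
  simp only [← hfactor]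
  classical
  rw [Pr_setOf_comp p (fun ω => (Prm ω, X ω, A ω, Y ω))
    (fun v => ((v.2.2.1, v.1), (fun i => f (v.2.1 i), v.2.2.2)) = ((a, πs), (yh, y)))]
  simp only [Prod.mk.injEq, ite_and, Fintype.sum_prod_type, sum_ite_irrel, sum_ite_eq', mem_univ,
    if_true, sum_const_zero, Fintype.prod_sum, mul_sum]
  refine sum_congr rfl fun x _ => ?_
  rw [hPrm, hiid, Fintype.prod_ite_zero, mul_ite, mul_zero]
  simp_rw [funext_iff]
  congr

open Classical in
theorem stmt_16_general {Ω 𝒳 𝒜 𝒴 𝒴' : Type*} [Fintype Ω] [Fintype 𝒳] [Fintype 𝒜] [Fintype 𝒴']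
    [Fintype 𝒴]
    (p : Ω → ℝ) (hp0 : ∀ ω, 0 ≤ p ω) (hp1 : ∑ ω, p ω = 1)
    (j : 𝒳 → 𝒜 → 𝒴 → ℝ)
    (hj1 : ∑ x, ∑ b, ∑ y0, j x b y0 = 1)
    (hmarg : ∀ b y0, 0 < ∑ x, j x b y0)
    {n K : ℕ}
    (X : Ω → Fin n → 𝒳) (A : Ω → Fin n → 𝒜) (Y : Ω → Fin n → 𝒴)
    (Prm : Ω → Fin K → Equiv.Perm (Fin n)) (f : 𝒳 → 𝒴')
    (q : 𝒴 → 𝒜 → ℝ) (hq : ∀ y0 b, q y0 b = (∑ x, j x b y0) / ∑ x, ∑ y', j x b y')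
    (hiid : ∀ (x : Fin n → 𝒳) (a : Fin n → 𝒜) (y : Fin n → 𝒴),
      Pr p {ω | X ω = x ∧ A ω = a ∧ Y ω = y} = ∏ i, j (x i) (a i) (y i))
    (hPrm : ∀ (x : Fin n → 𝒳) (a : Fin n → 𝒜) (y : Fin n → 𝒴)
        (πs : Fin K → Equiv.Perm (Fin n)),
      Pr p {ω | Prm ω = πs ∧ X ω = x ∧ A ω = a ∧ Y ω = y}
        = (∏ k, ICPweight q a y (πs k)) * Pr p {ω | X ω = x ∧ A ω = a ∧ Y ω = y})
    (hEO : ∀ (b : 𝒴') (a0 : 𝒜) (y0 : 𝒴),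
      (∑ x, if f x = b then j x a0 y0 else 0) * (∑ x, ∑ a', j x a' y0)
        = (∑ x, ∑ a', if f x = b then j x a' y0 else 0) * (∑ x, j x a0 y0))
    (T : (Fin n → 𝒴') → (Fin n → 𝒜) → (Fin n → 𝒴) → ℝ)
    (α : ℝ) (hα0 : 0 ≤ α) :
    Pr p {ω | ((1 : ℝ) + (Finset.univ.filter (fun k : Fin K =>
          T (fun i => f (X ω i)) (fun i => A ω (Prm ω k i)) (Y ω)
            ≤ T (fun i => f (X ω i)) (A ω) (Y ω))).card) / (K + 1) ≤ α}
      ≤ α := by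
  have : Nonempty 𝒴 := by
    by_contra h
    simp [not_nonempty_iff.mp h] at hj1
  have hg : ∀ b, (∑ x, ∑ y', j x b y')⁻¹ ≠ 0 := fun b => by
    refine inv_ne_zero ?_
    rw [sum_comm]
    exact (sum_pos (fun y' _ => hmarg b y') univ_nonempty).ne'
  have hq' : ∀ y0 b, q y0 b = (∑ x, j x b y0) * (∑ x, ∑ y', j x b y')⁻¹ := fun y0 b =>
    (hq y0 b).trans (div_eq_mul_inv _ _)
  obtain ⟨ρ, hlaw⟩ := exists_Pr_eq_mul_icpJointWeight p X A Y Prm f q j hiid hPrm hEO hmarg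
  let V : Ω → ((Fin n → 𝒜) × (Fin K → Equiv.Perm (Fin n))) × ((Fin n → 𝒴') × (Fin n → 𝒴)) :=
    fun ω => ((A ω, Prm ω), (fun i => f (X ω i), Y ω))
  let S : (Fin n → 𝒴') × (Fin n → 𝒴) → (Fin n → 𝒜) → ℝ := fun b a => T b.1 a b.2
  have hevent : {ω | ((1 : ℝ) + (Finset.univ.filter (fun k : Fin K =>
          T (fun i => f (X ω i)) (fun i => A ω (Prm ω k i)) (Y ω)
            ≤ T (fun i => f (X ω i)) (A ω) (Y ω))).card) / (K + 1) ≤ α}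
      = {ω | rankPValue (S (V ω).2 ∘ permutedCopies (V ω).1.1 (V ω).1.2) 0 ≤ α} := by
    simp only [rankPValue_comp_permutedCopies]
    rfl
  rw [hevent, Pr_setOf_comp p V fun v => rankPValue (S v.2 ∘ permutedCopies v.1.1 v.1.2) 0 ≤ α]
  calc _ ≤ α * ∑ v, Pr p {ω | V ω = v} :=
        sum_rankPValue_le _ (fun v => Pr_nonneg p hp0 _) _ 0 (fun l =>
          exists_equiv_swap_permutedCopies _ _ hg hq' Prod.snd
            (fun b : (Fin n → 𝒴') × (Fin n → 𝒴) => ∏ i, ρ (b.1 i) (b.2 i)) _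
            (fun _ => hlaw ..) S l) hα0
    _ = α := by rw [sum_Pr_fiber, hp1, mul_one]

open Classical in
/-- Proposition 2.3: the ICP-based hypothesis test for equalized odds
controls the type-I error: under the equalized-odds null `f(X₁) ⟂ A₁ ∣ Y₁`, the p-value
`p_v = (1 + ∑ₖ 1[T(Ŷ,A,Y) ≥ T(Ŷ,Ã⁽ᵏ⁾,Y)])/(K+1)` computed from `K` conditionally i.i.d.
ICP copies `Ã⁽ᵏ⁾ = A_{Π_k}` satisfies `P(p_v ≤ α) ≤ α` for all `α ∈ [0,1]`. -/
theorem stmt_16 {Ω 𝒳 𝒜 𝒴 𝒴' : Type*} [Fintype Ω] [Fintype 𝒳] [Fintype 𝒜] [Fintype 𝒴']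
    [Fintype 𝒴]
    (p : Ω → ℝ) (hp0 : ∀ ω, 0 ≤ p ω) (hp1 : ∑ ω, p ω = 1)
    (j : 𝒳 → 𝒜 → 𝒴 → ℝ) (hj0 : ∀ x b y0, 0 ≤ j x b y0)
    (hj1 : ∑ x, ∑ b, ∑ y0, j x b y0 = 1)
    (hmarg : ∀ b y0, 0 < ∑ x, j x b y0)
    {n K : ℕ} (hn : 1 ≤ n)
    (X : Ω → Fin n → 𝒳) (A : Ω → Fin n → 𝒜) (Y : Ω → Fin n → 𝒴)
    (Prm : Ω → Fin K → Equiv.Perm (Fin n)) (f : 𝒳 → 𝒴')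
    (q : 𝒴 → 𝒜 → ℝ) (hq : ∀ y0 b, q y0 b = (∑ x, j x b y0) / ∑ x, ∑ y', j x b y')
    (hiid : ∀ (x : Fin n → 𝒳) (a : Fin n → 𝒜) (y : Fin n → 𝒴),
      Pr p {ω | X ω = x ∧ A ω = a ∧ Y ω = y} = ∏ i, j (x i) (a i) (y i))
    (hPrm : ∀ (x : Fin n → 𝒳) (a : Fin n → 𝒜) (y : Fin n → 𝒴)
        (πs : Fin K → Equiv.Perm (Fin n)),
      Pr p {ω | Prm ω = πs ∧ X ω = x ∧ A ω = a ∧ Y ω = y}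
        = (∏ k, ICPweight q a y (πs k)) * Pr p {ω | X ω = x ∧ A ω = a ∧ Y ω = y})
    (hEO : ∀ (b : 𝒴') (a0 : 𝒜) (y0 : 𝒴),
      (∑ x, if f x = b then j x a0 y0 else 0) * (∑ x, ∑ a', j x a' y0)
        = (∑ x, ∑ a', if f x = b then j x a' y0 else 0) * (∑ x, j x a0 y0))
    (T : (Fin n → 𝒴') → (Fin n → 𝒜) → (Fin n → 𝒴) → ℝ)
    (α : ℝ) (hα0 : 0 ≤ α) (hα1 : α ≤ 1) :
    Pr p {ω | ((1 : ℝ) + (Finset.univ.filter (fun k : Fin K =>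
          T (fun i => f (X ω i)) (fun i => A ω (Prm ω k i)) (Y ω)
            ≤ T (fun i => f (X ω i)) (A ω) (Y ω))).card) / (K + 1) ≤ α}
      ≤ α :=
  stmt_16_general p hp0 hp1 j hj1 hmarg X A Y Prm f q hq hiid hPrm hEO T α hα0
end

section
/- Let 𝒜 and 𝒴 be finite sets and r a strictly positive joint probability mass function on 𝒜 × 𝒴 with conditionals q_{Y|A}(y|a) = r(a,y)/Σ_{y'} r(a,y') and q_{A|Y}(a|y) = r(a,y)/Σ_{a'} r(a',y). Let (A_1,Y_1),…,(A_n,Y_n) be i.i.d. with law r. Then for every y ∈ 𝒴ⁿ, every multiset S of size n over 𝒜 with P(S(A) = S, Y = y) > 0, every enumeration a = (a_1,…,a_n) of S, and every permutation π of {1,…,n}: P(A = a_π | S(A) = S, Y = y) = ∏_{i=1}^n q_{A|Y}(a_{π(i)}|y_i) / Σ_{π'} ∏_{i=1}^n q_{A|Y}(a_{π'(i)}|y_i) · m(a), where m(a) = ∏_{b ∈ 𝒜} (multiplicity of b in S)! is the constant accounting for repeated values (so that in particular the conditional probability is proportional to ∏_{i=1}^n q_{A|Y}(a_{π(i)}|y_i)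 as π ranges over all permutations). -/
/-!
Given `Y = y`, the event `S(A) = S(a)` is the disjoint union of the events `A = a'`, `Y = y` over
the rearrangements `a'` of `a`, each of probability `∏ i, r (a' i) (y i)`. Summing over
permutations `π'` instead of rearrangements `a ∘ π'` counts each rearrangement once for every
element of the stabiliser of `a`, i.e. `∏ b, (count b)!` times; the normalisers
`∑ b, r b (y i)` of `q_{A|Y}` are common to all terms and cancel.
-/

open Finset

section Permutations

variable {α : Type*} {n : ℕ}

lemma multisetOf_comp_perm_s19 (a : Fin n → α) (π : Equiv.Perm (Fin n)) :
    multisetOf (a ∘ π) = multisetOf a := by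
  rw [multisetOf, ← Multiset.map_map, Multiset.map_univ_val_equiv, multisetOf]

variable [DecidableEq α]

lemma count_multisetOf (a : Fin n → α) (b : α) :
    (multisetOf a).count b = Fintype.card {i // a i = b} := by
  rw [multisetOf, Multiset.count_map, Fintype.card_subtype, Finset.card_def, Finset.filter_val]
  simp only [eq_comm]

lemma exists_perm_of_multisetOf_eq {a a' : Fin n → α} (h : multisetOf a' = multisetOf a) :
    ∃ π : Equiv.Perm (Fin n), a' = a ∘ π := by
  have e : ∀ b, {i // a' i = b} ≃ {i // a i = b} := fun b =>
    Fintype.equivOfCardEq (by rw [← count_multisetOf, ← count_multisetOf, h])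
  -- match the fibres of `a'` and `a` over each value
  refine ⟨(Equiv.sigmaFiberEquiv a').symm.trans
    ((Equiv.sigmaCongrRight e).trans (Equiv.sigmaFiberEquiv a)), funext fun i => ?_⟩
  exact (e (a' i) ⟨i, rfl⟩).2.symm

lemma card_perm_comp_eq_comp [Fintype α] (a : Fin n → α) (σ : Equiv.Perm (Fin n)) :
    Fintype.card {π : Equiv.Perm (Fin n) // a ∘ π = a ∘ σ}
      = ∏ b, ((multisetOf a).count b).factorial := by
  have hcomp : ∀ π : Equiv.Perm (Fin n), a ∘ π = a ∘ σ ↔ a ∘ ⇑(π * σ⁻¹) = a := fun π => by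
    rw [Equiv.Perm.coe_mul, Equiv.Perm.inv_def, ← Function.comp_assoc, Equiv.comp_symm_eq]
  rw [Fintype.card_congr <| (Equiv.mulRight σ⁻¹).subtypeEquiv
      (q := fun g : Equiv.Perm (Fin n) => a ∘ ⇑g = a) hcomp, DomMulAct.stabilizer_card]
  simp only [count_multisetOf]

lemma sum_perm_comp_eq_nsmul_sum [Fintype α] {M : Type*} [AddCommMonoid M]
    (a : Fin n → α) (f : (Fin n → α) → M) :
    ∑ π : Equiv.Perm (Fin n), f (a ∘ π)
      = (∏ b, ((multisetOf a).count b).factorial) •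
          ∑ a' with multisetOf a' = multisetOf a, f a' := by
  have himage : univ.image (fun π : Equiv.Perm (Fin n) => a ∘ π)
      = univ.filter fun a' => multisetOf a' = multisetOf a := by
    ext a'
    simp only [mem_image, mem_filter, mem_univ, true_and]
    constructor
    · rintro ⟨π, rfl⟩
      exact multisetOf_comp_perm_s19 a π
    · intro h
      obtain ⟨π, rfl⟩ := exists_perm_of_multisetOf_eq h
      exact ⟨π, rfl⟩
  rw [sum_comp, himage, smul_sum]
  refine sum_congr rfl fun a' ha' => ?_
  obtain ⟨σ, rfl⟩ := exists_perm_of_multisetOf_eq (mem_filter.mp ha').2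
  rw [← card_perm_comp_eq_comp a σ, Fintype.card_subtype]

end Permutations

lemma Pr_eq_sum_Pr_eq {Ω β : Type*} [Fintype Ω] (p : Ω → ℝ) (X : Ω → β) (s : Finset β) :
    Pr p {ω | X ω ∈ s} = ∑ x ∈ s, Pr p {ω | X ω = x} := by
  classical
  simp only [Pr, Set.indicator_apply, Set.mem_ofPred_eq]
  rw [sum_comm]
  exact sum_congr rfl fun ω _ => (sum_ite_eq s (X ω) fun _ => p ω).symm

theorem stmt_19_general {Ω 𝒜 𝒴 : Type*} [Fintype Ω] [Fintype 𝒜] [Fintype 𝒴] [DecidableEq 𝒜]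
    (p : Ω → ℝ) (r : 𝒜 → 𝒴 → ℝ) (hr : ∀ b y0, 0 < r b y0) {n : ℕ}
    (A : Ω → Fin n → 𝒜) (Y : Ω → Fin n → 𝒴)
    (hiid : ∀ (a : Fin n → 𝒜) (y : Fin n → 𝒴),
      Pr p {ω | A ω = a ∧ Y ω = y} = ∏ i, r (a i) (y i))
    (y : Fin n → 𝒴) (a : Fin n → 𝒜) (π : Equiv.Perm (Fin n)) :
    Pr p {ω | A ω = (fun i => a (π i)) ∧ multisetOf (A ω) = multisetOf a ∧ Y ω = y} /
        Pr p {ω | multisetOf (A ω) = multisetOf a ∧ Y ω = y}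
      = (∏ i, (r (a (π i)) (y i) / ∑ b, r b (y i))) /
          (∑ π' : Equiv.Perm (Fin n), ∏ i, (r (a (π' i)) (y i) / ∑ b, r b (y i)))
        * ∏ b : 𝒜, (Nat.factorial (Multiset.count b (multisetOf a)) : ℝ) := by
  set m : ℝ := ∏ b : 𝒜, ((multisetOf a).count b).factorial
  set Z := ∏ i, ∑ b, r b (y i)
  have hnum : Pr p {ω | A ω = (fun i => a (π i)) ∧ multisetOf (A ω) = multisetOf a ∧ Y ω = y}
      = ∏ i, r (a (π i)) (y i) := by
    rw [← hiid]
    congr 1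
    ext ω
    simp only [Set.mem_ofPred_eq, and_congr_right_iff, and_iff_right_iff_imp]
    intro hA _
    rw [hA]
    exact multisetOf_comp_perm_s19 a π
  have hden : Pr p {ω | multisetOf (A ω) = multisetOf a ∧ Y ω = y}
      = ∑ a' with multisetOf a' = multisetOf a, ∏ i, r (a' i) (y i) := by
    have := Pr_eq_sum_Pr_eq p (fun ω => (A ω, Y ω))
      ((univ.filter fun a' => multisetOf a' = multisetOf a) ×ˢ {y})
    simpa [sum_product, hiid, eq_comm (a := y)] using this
  have hq : ∀ π' : Equiv.Perm (Fin n),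
      ∏ i, (r (a (π' i)) (y i) / ∑ b, r b (y i)) = (∏ i, r (a (π' i)) (y i)) / Z :=
    fun π' => prod_div_distrib _ _
  have hsum : ∑ π' : Equiv.Perm (Fin n), ∏ i, r (a (π' i)) (y i)
      = m * ∑ a' with multisetOf a' = multisetOf a, ∏ i, r (a' i) (y i) := by
    simpa [m] using sum_perm_comp_eq_nsmul_sum a fun a' => ∏ i, r (a' i) (y i)
  have hZ : Z ≠ 0 := prod_ne_zero_iff.mpr fun i _ =>
    (sum_pos (fun b _ => hr b (y i)) ⟨a i, mem_univ _⟩).ne'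
  have hm : m ≠ 0 := by positivity
  rw [hden]
  simp only [hq, ← sum_div, hsum, hnum]
  -- if the sum over rearrangements vanishes, both sides are `0` because `x / 0 = 0`
  field_simp

/-- equation (Alaw): for `(A_i, Y_i)` i.i.d. with strictly positive joint pmf
`r`, the conditional law of the ordered vector `A` given its multiset `S(A) = S(a)` and `Y = y`
is the conditional permutation distribution:
`P(A = a_π | S(A) = S(a), Y = y)`
`= [∏ᵢ q_{A|Y}(a_{π(i)}|y_i) / ∑_{π'} ∏ᵢ q_{A|Y}(a_{π'(i)}|y_i)] · m(a)`,
where `m(a) = ∏_{b ∈ 𝒜} (multiplicity of b in S(a))!`. -/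
theorem stmt_19 {Ω 𝒜 𝒴 : Type*} [Fintype Ω] [Fintype 𝒜] [Fintype 𝒴] [DecidableEq 𝒜]
    (p : Ω → ℝ) (hp0 : ∀ ω, 0 ≤ p ω) (hp1 : ∑ ω, p ω = 1)
    (r : 𝒜 → 𝒴 → ℝ) (hr : ∀ b y0, 0 < r b y0) (hr1 : ∑ b, ∑ y0, r b y0 = 1)
    {n : ℕ} (hn : 1 ≤ n)
    (A : Ω → Fin n → 𝒜) (Y : Ω → Fin n → 𝒴)
    (hiid : ∀ (a : Fin n → 𝒜) (y : Fin n → 𝒴),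
      Pr p {ω | A ω = a ∧ Y ω = y} = ∏ i, r (a i) (y i))
    (y : Fin n → 𝒴) (a : Fin n → 𝒜)
    (hpos : 0 < Pr p {ω | multisetOf (A ω) = multisetOf a ∧ Y ω = y})
    (π : Equiv.Perm (Fin n)) :
    Pr p {ω | A ω = (fun i => a (π i)) ∧ multisetOf (A ω) = multisetOf a ∧ Y ω = y} /
        Pr p {ω | multisetOf (A ω) = multisetOf a ∧ Y ω = y}
      = (∏ i, (r (a (π i)) (y i) / ∑ b, r b (y i))) /
          (∑ π' : Equiv.Perm (Fin n), ∏ i, (r (a (π' i)) (y i) / ∑ b, r b (y i)))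
        * ∏ b : 𝒜, (Nat.factorial (Multiset.count b (multisetOf a)) : ℝ) :=
  stmt_19_general p r hr A Y hiid y a π
end
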